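/- arXiv:2506.03878 — 4 statements merged into one kernel-verified Lean document; each statement's English description precedes it below -/
import Mathlib

section
/- Let m>0, ε>0, and let η:(0,1)→ℝ be a C¹ diffeomorphism onto ℝ with everywhere positive derivative. Suppose ψ:ℝ³×[0,∞)→ℝ is continuous and satisfies, for every ε-quasi-resonant collision tuple (v,v*,I,I*,I',I'*,σ), the identity ψ(v',I')+ψ(v'*,I'*)=ψ(v,I)+ψ(v*,I*). Then there exist constants a₁,a₂∈ℝ and a vector p∈ℝ³ such that ψ(v,I)=a₁+p·v+a₂((m/2)‖v‖²+I) for all v∈ℝ³ and I≥0. -/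
open Set MeasureTheory


noncomputable section

/-- Total energy in the center of mass: `E = (m/4)‖v - v*‖² + I + I*`. -/
def colE (m : ℝ) (v vs : EuclideanSpace ℝ (Fin 3)) (I Is : ℝ) : ℝ :=
  m / 4 * ‖v - vs‖ ^ 2 + I + Is

/-- Post-collisional velocity `v' = (v+v*)/2 + (2/√m)·√(E-(I'+I'*))·σ`. -/
def vPost (m : ℝ) (v vs : EuclideanSpace ℝ (Fin 3)) (I Is I' Is' : ℝ)
    (σ : EuclideanSpace ℝ (Fin 3)) : EuclideanSpace ℝ (Fin 3) :=
  (2 : ℝ)⁻¹ • (v + vs) + (2 / Real.sqrt m * Real.sqrt (colE m v vs I Is - (I' + Is'))) • σ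

/-- Post-collisional velocity `v'* = (v+v*)/2 - (2/√m)·√(E-(I'+I'*))·σ`. -/
def vPostStar (m : ℝ) (v vs : EuclideanSpace ℝ (Fin 3)) (I Is I' Is' : ℝ)
    (σ : EuclideanSpace ℝ (Fin 3)) : EuclideanSpace ℝ (Fin 3) :=
  (2 : ℝ)⁻¹ • (v + vs) - (2 / Real.sqrt m * Real.sqrt (colE m v vs I Is - (I' + Is'))) • σ

/-- Ratio of post-collisional kinetic energy to total energy: `R = 1 - (I'+I'*)/E`. -/
def Rpost (m : ℝ) (v vs : EuclideanSpace ℝ (Fin 3)) (I Is I' Is' : ℝ) : ℝ :=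
  1 - (I' + Is') / colE m v vs I Is

/-- Ratio of pre-collisional kinetic energy to total energy: `R' = 1 - (I+I*)/E`. -/
def Rpre (m : ℝ) (v vs : EuclideanSpace ℝ (Fin 3)) (I Is : ℝ) : ℝ :=
  1 - (I + Is) / colE m v vs I Is

/-- A collision tuple is `ε`-quasi-resonant if `E > 0`, `I'+I'* ≤ E`, `R, R' ∈ (0,1)` and
`|η(R) - η(R')| ≤ ε`. -/
def QuasiResonant (m ε : ℝ) (η : ℝ → ℝ) (v vs : EuclideanSpace ℝ (Fin 3))
    (I Is I' Is' : ℝ) : Prop :=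
  0 < colE m v vs I Is ∧ I' + Is' ≤ colE m v vs I Is ∧
    Rpost m v vs I Is I' Is' ∈ Ioo (0 : ℝ) 1 ∧ Rpre m v vs I Is ∈ Ioo (0 : ℝ) 1 ∧
    |η (Rpost m v vs I Is I' Is') - η (Rpre m v vs I Is)| ≤ ε

/-- **Characterization of the quasi-resonant collision invariants.**
If `ψ` is a continuous `ε`-quasi-resonant collision invariant, then
`ψ(v,I) = a₁ + p·v + a₂((m/2)‖v‖² + I)`. -/
theorem quasiResonant_collision_invariant
    (m ε : ℝ) (hm : 0 < m) (hε : 0 < ε)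
    (η η' : ℝ → ℝ)
    (hη_deriv : ∀ R ∈ Ioo (0 : ℝ) 1, HasDerivAt η (η' R) R)
    (hη'_cont : ContinuousOn η' (Ioo (0 : ℝ) 1))
    (hη'_pos : ∀ R ∈ Ioo (0 : ℝ) 1, 0 < η' R)
    (hη_bij : BijOn η (Ioo (0 : ℝ) 1) univ)
    (ψ : EuclideanSpace ℝ (Fin 3) → ℝ → ℝ)
    (hψ_cont : ContinuousOn (fun p : EuclideanSpace ℝ (Fin 3) × ℝ => ψ p.1 p.2)
      (univ ×ˢ Ici (0 : ℝ)))
    (hψ_inv : ∀ (v vs : EuclideanSpace ℝ (Fin 3)) (I Is I' Is' : ℝ)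
      (σ : EuclideanSpace ℝ (Fin 3)),
      0 ≤ I → 0 ≤ Is → 0 ≤ I' → 0 ≤ Is' → ‖σ‖ = 1 →
      QuasiResonant m ε η v vs I Is I' Is' →
      ψ (vPost m v vs I Is I' Is' σ) I' + ψ (vPostStar m v vs I Is I' Is' σ) Is'
        = ψ v I + ψ vs Is) :
    ∃ (a₁ a₂ : ℝ) (p : EuclideanSpace ℝ (Fin 3)),
      ∀ (v : EuclideanSpace ℝ (Fin 3)) (I : ℝ), 0 ≤ I →
        ψ v I = a₁ + (inner ℝ p v : ℝ) + a₂ * (m / 2 * ‖v‖ ^ 2 + I) := by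
  classical
  -- continuity in the velocity variable
  have hc1 : ∀ {I : ℝ}, 0 ≤ I → Continuous fun x : EuclideanSpace ℝ (Fin 3) => ψ x I := by
    intro I hI
    have hmap : Continuous fun x : EuclideanSpace ℝ (Fin 3) => ((x, I) : EuclideanSpace ℝ (Fin 3) × ℝ) :=
      continuous_id.prodMk continuous_const
    exact hψ_cont.comp_continuous hmap fun x => ⟨mem_univ _, hI⟩
  -- continuity in the internal energy variable
  have hc2 : ∀ x : EuclideanSpace ℝ (Fin 3), ContinuousWithinAt (fun I => ψ x I) (Ici 0) 0 := by
    intro x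
    have hmap : Continuous fun I : ℝ => ((x, I) : EuclideanSpace ℝ (Fin 3) × ℝ) :=
      continuous_const.prodMk continuous_id
    have := (hψ_cont ((x, (0:ℝ)))) ⟨mem_univ _, mem_Ici.mpr le_rfl⟩
    exact (this.comp hmap.continuousWithinAt (fun I hI => ⟨mem_univ _, hI⟩))
  -- sequence 1/(n+1) → 0 within Ici 0
  have hseq : Filter.Tendsto (fun n : ℕ => (1:ℝ)/(n+1)) Filter.atTop (nhdsWithin 0 (Ici 0)) := by
    apply tendsto_nhdsWithin_of_tendsto_nhds_of_eventually_within
    · exact tendsto_one_div_add_atTop_nhds_zero_nat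
    · exact Filter.Eventually.of_forall fun n => mem_Ici.mpr (by positivity)
  have hlim0 : ∀ x : EuclideanSpace ℝ (Fin 3),
      Filter.Tendsto (fun n : ℕ => ψ x (1/(n+1))) Filter.atTop (nhds (ψ x 0)) :=
    fun x => (hc2 x).tendsto.comp hseq
  -- Step 1: the resonant collision identity
  have star : ∀ (V e σ : EuclideanSpace ℝ (Fin 3)) (r I Is I' Is' : ℝ),
      ‖e‖ = 1 → ‖σ‖ = 1 → 0 < r → 0 ≤ I → 0 ≤ Is → 0 ≤ I' → 0 ≤ Is' →
      I + Is = I' + Is' → 0 < I + Is →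
      ψ (V + r • σ) I' + ψ (V - r • σ) Is'
        = ψ (V + (r / 2) • e) I + ψ (V - (r / 2) • e) Is := by
    intro V e σ r I Is I' Is' he hσ hr hI hIs hI' hIs' hsum hpos
    set v := V + (r / 2) • e with hv
    set vs := V - (r / 2) • e with hvs
    have hsub : v - vs = r • e := by rw [hv, hvs]; module
    have hnorm : ‖v - vs‖ ^ 2 = r ^ 2 := by
      rw [hsub, norm_smul, he, Real.norm_eq_abs, abs_of_pos hr]; ring
    have hE : colE m v vs I Is = m / 4 * r ^ 2 + (I + Is) := by
      rw [colE, hnorm]; ring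
    have hEsub : colE m v vs I Is - (I' + Is') = m / 4 * r ^ 2 := by
      rw [hE, ← hsum]; ring
    have hsqm : (0:ℝ) < Real.sqrt m := Real.sqrt_pos.mpr hm
    have hcoef : 2 / Real.sqrt m * Real.sqrt (colE m v vs I Is - (I' + Is')) = r := by
      rw [hEsub]
      have h1 : m / 4 * r ^ 2 = (Real.sqrt m / 2 * r) ^ 2 := by
        rw [mul_pow, div_pow, Real.sq_sqrt hm.le]; ring
      rw [h1, Real.sqrt_sq (by positivity)]
      field_simp
    have hk : (0:ℝ) < m / 4 * r ^ 2 := by positivity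
    have hEpos : (0:ℝ) < colE m v vs I Is := by rw [hE]; linarith
    have hlt : I' + Is' < colE m v vs I Is := by rw [hE, ← hsum]; linarith
    have hpos' : 0 < I' + Is' := hsum ▸ hpos
    have hQR : QuasiResonant m ε η v vs I Is I' Is' := by
      refine ⟨hEpos, hlt.le, ?_, ?_, ?_⟩
      · exact ⟨sub_pos.mpr ((div_lt_one hEpos).mpr hlt),
          sub_lt_self _ (div_pos hpos' hEpos)⟩
      · refine ⟨sub_pos.mpr ((div_lt_one hEpos).mpr (hsum ▸ hlt)),
          sub_lt_self _ (div_pos hpos hEpos)⟩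
      · have hRR : Rpost m v vs I Is I' Is' = Rpre m v vs I Is := by
          rw [Rpost, Rpre, hsum]
        rw [hRR]
        simpa using hε.le
    have h := hψ_inv v vs I Is I' Is' σ hI hIs hI' hIs' hσ hQR
    have hvpost : vPost m v vs I Is I' Is' σ = V + r • σ := by
      rw [vPost, hcoef, hv, hvs]; module
    have hvposts : vPostStar m v vs I Is I' Is' σ = V - r • σ := by
      rw [vPostStar, hcoef, hv, hvs]; module
    rw [hvpost, hvposts] at h
    exact h
  -- Step 2: sphere identity with shrinking
  have L2 : ∀ (V w : EuclideanSpace ℝ (Fin 3)) (I Is : ℝ), 0 ≤ I → 0 ≤ Is → 0 < I + Is →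
      ψ (V + w) I + ψ (V - w) Is = ψ V I + ψ V Is := by
    intro V w I Is hI hIs hpos
    rcases eq_or_ne w 0 with h0 | h0
    · simp [h0]
    set σ := ‖w‖⁻¹ • w with hσdef
    have hσ : ‖σ‖ = 1 := norm_smul_inv_norm h0
    set f : ℝ → ℝ := fun r => ψ (V + r • σ) I + ψ (V - r • σ) Is with hf
    have hf_cont : Continuous f := by
      apply Continuous.add
      · exact (hc1 hI).comp (continuous_const.add (continuous_id.smul continuous_const))
      · exact (hc1 hIs).comp (continuous_const.sub (continuous_id.smul continuous_const))
    have hhalf : ∀ r : ℝ, 0 < r → f r = f (r / 2) := by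
      intro r hr
      exact star V σ σ r I Is I Is hσ hσ hr hI hIs hI hIs rfl hpos
    have hwpos : 0 < ‖w‖ := norm_pos_iff.mpr h0
    have hiter : ∀ n : ℕ, f ‖w‖ = f (‖w‖ / 2 ^ n) := by
      intro n
      induction n with
      | zero => simp
      | succ n ih =>
        rw [ih, hhalf (‖w‖ / 2 ^ n) (by positivity)]
        congr 1
        rw [div_div]
        ring_nf
    have htend : Filter.Tendsto (fun n : ℕ => ‖w‖ / 2 ^ n) Filter.atTop (nhds 0) := by
      have h := tendsto_pow_atTop_nhds_zero_of_lt_one (by norm_num : (0:ℝ) ≤ 1/2)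
        (by norm_num : (1:ℝ)/2 < 1)
      have h2 := h.const_mul ‖w‖
      rw [mul_zero] at h2
      refine h2.congr fun n => ?_
      rw [div_pow, one_pow, mul_one_div]
    have hcomp : Filter.Tendsto (fun n : ℕ => f (‖w‖ / 2 ^ n)) Filter.atTop (nhds (f 0)) :=
      (hf_cont.tendsto 0).comp htend
    have hconst : Filter.Tendsto (fun _ : ℕ => f ‖w‖) Filter.atTop (nhds (f ‖w‖)) :=
      tendsto_const_nhds
    have heq : f ‖w‖ = f 0 := by
      apply tendsto_nhds_unique (hconst.congr fun n => hiter n) hcomp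
    have hws : ‖w‖ • σ = w := by
      rw [hσdef, smul_smul, mul_inv_cancel₀ (ne_of_gt hwpos), one_smul]
    have : f ‖w‖ = ψ (V + w) I + ψ (V - w) Is := by rw [hf]; simp [hws]
    rw [← this, heq, hf]; simp
  -- Step 2': extend to Is = 0, I = 0
  have L2' : ∀ (V w : EuclideanSpace ℝ (Fin 3)) (I : ℝ), 0 ≤ I →
      ψ (V + w) I + ψ (V - w) 0 = ψ V I + ψ V 0 := by
    intro V w I hI
    rcases hI.lt_or_eq with h | h
    · exact L2 V w I 0 hI le_rfl (by linarith)
    · -- I = 0 : take a limit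
      subst h
      have hn : ∀ n : ℕ, ψ (V + w) (1/(n+1)) + ψ (V - w) 0 = ψ V (1/(n+1)) + ψ V 0 := by
        intro n
        have hp : (0:ℝ) < 1/(n+1) := by positivity
        exact L2 V w (1/(n+1)) 0 hp.le le_rfl (by linarith)
      have h1 : Filter.Tendsto (fun n : ℕ => ψ (V + w) (1/(n+1)) + ψ (V - w) 0)
          Filter.atTop (nhds (ψ (V + w) 0 + ψ (V - w) 0)) :=
        (hlim0 (V + w)).add tendsto_const_nhds
      have h2 : Filter.Tendsto (fun n : ℕ => ψ V (1/(n+1)) + ψ V 0)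
          Filter.atTop (nhds (ψ V 0 + ψ V 0)) :=
        (hlim0 V).add tendsto_const_nhds
      exact tendsto_nhds_unique (h1.congr fun n => hn n) h2
  -- Jensen / midpoint identity for φ := ψ · 0
  have jensen : ∀ V w : EuclideanSpace ℝ (Fin 3),
      ψ (V + w) 0 + ψ (V - w) 0 = ψ V 0 + ψ V 0 := fun V w => L2' V w 0 le_rfl
  -- Step 3: separation of variables
  have sep : ∀ (x : EuclideanSpace ℝ (Fin 3)) (I : ℝ), 0 ≤ I →
      ψ x I = ψ x 0 + (ψ 0 I - ψ 0 0) := by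
    intro x I hI
    have h1 := L2' 0 x I hI
    have h2 := jensen 0 x
    simp only [zero_add, zero_sub] at h1 h2
    linarith
  -- Step 4: φ is affine
  have haddψ : ∀ x y : EuclideanSpace ℝ (Fin 3),
      (ψ (x + y) 0 - ψ 0 0) = (ψ x 0 - ψ 0 0) + (ψ y 0 - ψ 0 0) := by
    intro x y
    have h1 := jensen ((2:ℝ)⁻¹ • (x + y)) ((2:ℝ)⁻¹ • (x - y))
    have h2 := jensen ((2:ℝ)⁻¹ • (x + y)) ((2:ℝ)⁻¹ • (x + y))
    have e1 : (2:ℝ)⁻¹ • (x + y) + (2:ℝ)⁻¹ • (x - y) = x := by module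
    have e2 : (2:ℝ)⁻¹ • (x + y) - (2:ℝ)⁻¹ • (x - y) = y := by module
    have e3 : (2:ℝ)⁻¹ • (x + y) + (2:ℝ)⁻¹ • (x + y) = x + y := by module
    have e4 : (2:ℝ)⁻¹ • (x + y) - (2:ℝ)⁻¹ • (x + y) = (0 : EuclideanSpace ℝ (Fin 3)) := by
      module
    rw [e1, e2] at h1
    rw [e3, e4] at h2
    linarith
  set ℓ : EuclideanSpace ℝ (Fin 3) →+ ℝ :=
    AddMonoidHom.mk' (fun x => ψ x 0 - ψ 0 0) haddψ with hℓdef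
  have hℓcont : Continuous ℓ := by
    have h : Continuous (fun x : EuclideanSpace ℝ (Fin 3) => ψ x 0 - ψ 0 0) :=
      (hc1 le_rfl).sub continuous_const
    exact h
  set L : EuclideanSpace ℝ (Fin 3) →L[ℝ] ℝ := ℓ.toRealLinearMap hℓcont with hLdef
  have hLapp : ∀ x, L x = ψ x 0 - ψ 0 0 := by
    intro x
    simp [hLdef, hℓdef, AddMonoidHom.coe_toRealLinearMap]
  set p : EuclideanSpace ℝ (Fin 3) :=
    (InnerProductSpace.toDual ℝ (EuclideanSpace ℝ (Fin 3))).symm L with hpdef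
  have hpapp : ∀ x, (inner ℝ p x : ℝ) = L x := by
    intro x
    rw [hpdef]
    exact InnerProductSpace.toDual_symm_apply
  -- Step 5: g is locally constant on (0, ∞)
  have gloc : ∀ I : ℝ, 0 < I → ∃ δ > 0, ∀ J, 0 < J → |J - I| < δ → ψ 0 J = ψ 0 I := by
    intro I hI
    set e₁ : EuclideanSpace ℝ (Fin 3) := EuclideanSpace.single (0 : Fin 3) (1:ℝ) with he₁def
    have he₁ : ‖e₁‖ = 1 := by simp [he₁def]
    set v : EuclideanSpace ℝ (Fin 3) := (2 / Real.sqrt m) • e₁ with hvdef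
    have hsqm : (0:ℝ) < Real.sqrt m := Real.sqrt_pos.mpr hm
    have hnv : ‖v - 0‖ ^ 2 = 4 / m := by
      rw [sub_zero, hvdef, norm_smul, he₁, Real.norm_eq_abs, abs_of_pos (by positivity)]
      rw [mul_one, div_pow, Real.sq_sqrt hm.le]
      norm_num
    have hcol : ∀ K : ℝ, colE m v 0 I 0 = 1 + I := by
      intro K
      rw [colE, hnv]
      field_simp
      ring
    have hE : colE m v 0 I 0 = 1 + I := hcol 0
    have hEpos : (0:ℝ) < 1 + I := by linarith
    have hR' : (1 - I / (1 + I)) ∈ Ioo (0:ℝ) 1 := by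
      constructor
      · rw [sub_pos]; exact (div_lt_one hEpos).mpr (by linarith)
      · exact sub_lt_self _ (div_pos hI hEpos)
    have hηcont : ContinuousAt η (1 - I / (1 + I)) := (hη_deriv _ hR').continuousAt
    obtain ⟨δ₁, hδ₁pos, hδ₁⟩ := Metric.continuousAt_iff.mp hηcont ε hε
    refine ⟨min (δ₁ * (1 + I)) 1, lt_min (by positivity) one_pos, ?_⟩
    intro J hJ hJclose
    have hJclose1 : |J - I| < δ₁ * (1 + I) := lt_of_lt_of_le hJclose (min_le_left _ _)
    have hJclose2 : |J - I| < 1 := lt_of_lt_of_le hJclose (min_le_right _ _)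
    have hJltE : J < 1 + I := by
      rcases abs_lt.mp hJclose2 with ⟨_, h⟩; linarith
    have hQR : QuasiResonant m ε η v 0 I 0 J 0 := by
      have hRpost : Rpost m v 0 I 0 J 0 = 1 - J / (1 + I) := by
        rw [Rpost, hE]; norm_num
      have hRpre : Rpre m v 0 I 0 = 1 - I / (1 + I) := by
        rw [Rpre, hE]; norm_num
      refine ⟨by rw [hE]; exact hEpos, by rw [hE]; linarith, ?_, ?_, ?_⟩
      · rw [hRpost]
        constructor
        · rw [sub_pos]; exact (div_lt_one hEpos).mpr hJltE
        · exact sub_lt_self _ (div_pos hJ hEpos)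
      · rw [hRpre]; exact hR'
      · rw [hRpost, hRpre]
        have hdist : dist (1 - J / (1 + I)) (1 - I / (1 + I)) < δ₁ := by
          rw [Real.dist_eq]
          have : (1 - J / (1 + I)) - (1 - I / (1 + I)) = (I - J) / (1 + I) := by
            field_simp; ring
          rw [this, abs_div, abs_of_pos hEpos, div_lt_iff₀ hEpos]
          rw [abs_sub_comm] at hJclose1
          exact hJclose1
        have := hδ₁ hdist
        rw [Real.dist_eq] at this
        exact this.le
    have hkey := hψ_inv v 0 I 0 J 0 e₁ hI.le le_rfl hJ.le le_rfl he₁ hQR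
    -- rewrite using separation and affinity
    set c : ℝ := 2 / Real.sqrt m * Real.sqrt (colE m v 0 I 0 - (J + 0)) with hcdef
    have hvp : vPost m v 0 I 0 J 0 e₁ = (2:ℝ)⁻¹ • v + c • e₁ := by
      rw [vPost, hcdef, add_zero]
    have hvps : vPostStar m v 0 I 0 J 0 e₁ = (2:ℝ)⁻¹ • v - c • e₁ := by
      rw [vPostStar, hcdef, add_zero]
    rw [hvp, hvps] at hkey
    have hsep1 : ψ ((2:ℝ)⁻¹ • v + c • e₁) J
        = ψ ((2:ℝ)⁻¹ • v + c • e₁) 0 + (ψ 0 J - ψ 0 0) := sep _ J hJ.le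
    have hsep2 : ψ v I = ψ v 0 + (ψ 0 I - ψ 0 0) := sep v I hI.le
    have hjen1 := jensen ((2:ℝ)⁻¹ • v) (c • e₁)
    have hjen2 := jensen ((2:ℝ)⁻¹ • v) ((2:ℝ)⁻¹ • v)
    have e3 : (2:ℝ)⁻¹ • v + (2:ℝ)⁻¹ • v = v := by module
    have e4 : (2:ℝ)⁻¹ • v - (2:ℝ)⁻¹ • v = (0 : EuclideanSpace ℝ (Fin 3)) := by module
    rw [e3, e4] at hjen2
    linarith
  -- Step 5b: g constant on (0, ∞) by connectedness
  have gconst : ∀ I : ℝ, 0 < I → ψ 0 I = ψ 0 1 := by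
    haveI : PreconnectedSpace ↥(Ioi (0:ℝ)) :=
      Subtype.preconnectedSpace isPreconnected_Ioi
    have hGlc : IsLocallyConstant (fun t : ↥(Ioi (0:ℝ)) => ψ 0 (t : ℝ)) := by
      rw [IsLocallyConstant.iff_exists_open]
      rintro ⟨I, hI⟩
      obtain ⟨δ, hδpos, hδ⟩ := gloc I hI
      refine ⟨Subtype.val ⁻¹' (Ioo (I - δ) (I + δ)), isOpen_Ioo.preimage continuous_subtype_val,
        ⟨by simpa using hδpos, by simpa using hδpos⟩, ?_⟩
      rintro ⟨J, hJ⟩ hJm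
      simp only [mem_preimage, mem_Ioo] at hJm
      exact hδ J hJ (abs_lt.mpr ⟨by linarith [hJm.1], by linarith [hJm.2]⟩)
    intro I hI
    exact hGlc.apply_eq_of_preconnectedSpace ⟨I, hI⟩ ⟨1, by norm_num⟩
  -- Step 5c: the constant is ψ 0 0
  have gzero : ∀ I : ℝ, 0 ≤ I → ψ 0 I = ψ 0 0 := by
    have hone : ψ 0 1 = ψ 0 0 := by
      have hn : ∀ n : ℕ, ψ 0 ((1:ℝ)/(n+1)) = ψ 0 1 := fun n => gconst _ (by positivity)
      have h1 : Filter.Tendsto (fun n : ℕ => ψ (0 : EuclideanSpace ℝ (Fin 3)) (1/(n+1)))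
          Filter.atTop (nhds (ψ 0 0)) := hlim0 0
      exact tendsto_nhds_unique ((tendsto_const_nhds).congr fun n => (hn n).symm) h1
    intro I hI
    rcases hI.lt_or_eq with h | h
    · rw [gconst I h, hone]
    · rw [← h]
  -- Conclusion
  refine ⟨ψ 0 0, 0, p, ?_⟩
  intro v I hI
  have h1 := sep v I hI
  rw [gzero I hI] at h1
  have h2 := hLapp v
  rw [hpapp v]
  rw [h1]
  linarith

end
end

section
/- Let m>0, ε>0, and let η:(0,1)→ℝ be a C¹ diffeomorphism onto ℝ with everywhere positive derivative. Suppose f:ℝ³×[0,∞)→(0,∞) is continuous and satisfies, for every ε-quasi-resonant collision tuple (v,v*,I,I*,I',I'*,σ), the identity f(v',I')·f(v'*,I'*)=f(v,I)·f(v*,I*). Then there exist c>0, p∈ℝ³ and a∈ℝ such that f(v,I)=c·exp(p·v+a·((m/2)‖v‖²+I)) for all v∈ℝ³ and I≥0. (This is the equality case of the H-theorem: distributions with vanishing quasi-resonant entropy production are one-temperature Maxwellians.) -/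
open Set MeasureTheory


noncomputable section

/-- **Equality case of the H-theorem for the quasi-resonant model.**
If `f > 0` is continuous and `f' f'* = f f*` along every `ε`-quasi-resonant collision,
then `f` is a one-temperature Maxwellian: `f(v,I) = c·exp(p·v + a((m/2)‖v‖² + I))`. -/
theorem quasiResonant_equilibrium_is_maxwellian
    (m ε : ℝ) (hm : 0 < m) (hε : 0 < ε)
    (η η' : ℝ → ℝ)
    (hη_deriv : ∀ R ∈ Ioo (0 : ℝ) 1, HasDerivAt η (η' R) R)
    (hη'_cont : ContinuousOn η' (Ioo (0 : ℝ) 1))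
    (hη'_pos : ∀ R ∈ Ioo (0 : ℝ) 1, 0 < η' R)
    (hη_bij : BijOn η (Ioo (0 : ℝ) 1) univ)
    (f : EuclideanSpace ℝ (Fin 3) → ℝ → ℝ)
    (hf_pos : ∀ (v : EuclideanSpace ℝ (Fin 3)) (I : ℝ), 0 ≤ I → 0 < f v I)
    (hf_cont : ContinuousOn (fun p : EuclideanSpace ℝ (Fin 3) × ℝ => f p.1 p.2)
      (univ ×ˢ Ici (0 : ℝ)))
    (hf_eq : ∀ (v vs : EuclideanSpace ℝ (Fin 3)) (I Is I' Is' : ℝ)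
      (σ : EuclideanSpace ℝ (Fin 3)),
      0 ≤ I → 0 ≤ Is → 0 ≤ I' → 0 ≤ Is' → ‖σ‖ = 1 →
      QuasiResonant m ε η v vs I Is I' Is' →
      f (vPost m v vs I Is I' Is' σ) I' * f (vPostStar m v vs I Is I' Is' σ) Is'
        = f v I * f vs Is) :
    ∃ (c a : ℝ) (p : EuclideanSpace ℝ (Fin 3)), 0 < c ∧
      ∀ (v : EuclideanSpace ℝ (Fin 3)) (I : ℝ), 0 ≤ I →
        f v I = c * Real.exp ((inner ℝ p v : ℝ) + a * (m / 2 * ‖v‖ ^ 2 + I)) := by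
  classical
  -- Continuity of `f` in the velocity variable for fixed admissible internal energy.
  have hfc1 : ∀ (I : ℝ), 0 ≤ I → Continuous (fun v : EuclideanSpace ℝ (Fin 3) => f v I) := by
    intro I hI
    have hmap : Continuous (fun v : EuclideanSpace ℝ (Fin 3) =>
        (v, I) : EuclideanSpace ℝ (Fin 3) → EuclideanSpace ℝ (Fin 3) × ℝ) :=
      continuous_id.prodMk continuous_const
    have h : ContinuousOn (fun v : EuclideanSpace ℝ (Fin 3) => f v I) univ :=
      hf_cont.comp hmap.continuousOn (fun v _ => ⟨mem_univ v, hI⟩)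
    exact continuousOn_univ.mp h
  -- Continuity of `f` in the internal energy variable.
  have hfc2 : ∀ u : EuclideanSpace ℝ (Fin 3), ContinuousOn (fun I => f u I) (Ici (0 : ℝ)) := by
    intro u
    have hmap : Continuous (fun I : ℝ => ((u, I) : EuclideanSpace ℝ (Fin 3) × ℝ)) :=
      continuous_const.prodMk continuous_id
    exact hf_cont.comp hmap.continuousOn (fun I hI => ⟨mem_univ u, hI⟩)
  -- Energy computation for a symmetric pair.
  have hcolE : ∀ (u w : EuclideanSpace ℝ (Fin 3)) (I Is : ℝ),
      colE m (u + w) (u - w) I Is = m * ‖w‖ ^ 2 + I + Is := by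
    intro u w I Is
    have h2 : (u + w) - (u - w) = (2 : ℝ) • w := by module
    rw [colE, h2, norm_smul, Real.norm_two]
    ring
  have hsm : Real.sqrt m ≠ 0 := ne_of_gt (Real.sqrt_pos.mpr hm)
  -- The resonant collision identity with the doubled radius.
  have hK : ∀ (u w σ : EuclideanSpace ℝ (Fin 3)) (I Is I' Is' : ℝ), w ≠ 0 → ‖σ‖ = 1 →
      0 ≤ I → 0 ≤ Is → 0 ≤ I' → 0 ≤ Is' → I' + Is' = I + Is → 0 < I + Is →
      f (u + (2 * ‖w‖) • σ) I' * f (u - (2 * ‖w‖) • σ) Is' = f (u + w) I * f (u - w) Is := by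
    intro u w σ I Is I' Is' hw hσ hI hIs hI' hIs' hsum hpos
    have hwn : 0 < ‖w‖ := norm_pos_iff.mpr hw
    have hkinpos : 0 < m * ‖w‖ ^ 2 := mul_pos hm (pow_pos hwn 2)
    have hE : colE m (u + w) (u - w) I Is = m * ‖w‖ ^ 2 + I + Is := hcolE u w I Is
    have hEpos : 0 < colE m (u + w) (u - w) I Is := by rw [hE]; linarith
    have hkin : colE m (u + w) (u - w) I Is - (I' + Is') = m * ‖w‖ ^ 2 := by
      rw [hE, hsum]; ring
    have hcoeff : 2 / Real.sqrt m *
        Real.sqrt (colE m (u + w) (u - w) I Is - (I' + Is')) = 2 * ‖w‖ := by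
      rw [hkin, Real.sqrt_mul hm.le, Real.sqrt_sq (norm_nonneg w)]
      field_simp
    have hv1 : vPost m (u + w) (u - w) I Is I' Is' σ = u + (2 * ‖w‖) • σ := by
      rw [vPost, hcoeff]; module
    have hv2 : vPostStar m (u + w) (u - w) I Is I' Is' σ = u - (2 * ‖w‖) • σ := by
      rw [vPostStar, hcoeff]; module
    have hfrac1 : 0 < (I + Is) / colE m (u + w) (u - w) I Is := div_pos hpos hEpos
    have hfrac2 : (I + Is) / colE m (u + w) (u - w) I Is < 1 := by
      rw [div_lt_one hEpos, hE]; linarith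
    have hQR : QuasiResonant m ε η (u + w) (u - w) I Is I' Is' := by
      refine ⟨hEpos, ?_, ?_, ?_, ?_⟩
      · rw [hE, hsum]; linarith
      · rw [Rpost, hsum]
        exact mem_Ioo.mpr ⟨by linarith, by linarith⟩
      · rw [Rpre]
        exact mem_Ioo.mpr ⟨by linarith, by linarith⟩
      · have hRR : Rpost m (u + w) (u - w) I Is I' Is' = Rpre m (u + w) (u - w) I Is := by
          rw [Rpost, Rpre, hsum]
        rw [hRR, sub_self, abs_zero]
        exact hε.le
    have := hf_eq (u + w) (u - w) I Is I' Is' σ hI hIs hI' hIs' hσ hQR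
    rwa [hv1, hv2] at this
  -- The pair-product rigidity: the product only depends on the midpoint.
  have hL1 : ∀ (u z : EuclideanSpace ℝ (Fin 3)) (I Is : ℝ), 0 ≤ I → 0 ≤ Is → 0 < I + Is →
      f (u + z) I * f (u - z) Is = f u I * f u Is := by
    intro u z I Is hI hIs hpos
    rcases eq_or_ne z 0 with rfl | hz
    · simp
    have hstep : ∀ y : EuclideanSpace ℝ (Fin 3), y ≠ 0 →
        f (u + y) I * f (u - y) Is = f (u + (2:ℝ)⁻¹ • y) I * f (u - (2:ℝ)⁻¹ • y) Is := by
      intro y hy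
      have hy' : (2:ℝ)⁻¹ • y ≠ 0 := smul_ne_zero (by norm_num) hy
      have hyn : ‖y‖ ≠ 0 := norm_ne_zero_iff.mpr hy
      have hσ : ‖(‖y‖⁻¹ • y : EuclideanSpace ℝ (Fin 3))‖ = 1 := by
        rw [norm_smul, Real.norm_eq_abs, abs_inv, abs_norm]
        field_simp
      have hnorm : 2 * ‖((2:ℝ)⁻¹ • y : EuclideanSpace ℝ (Fin 3))‖ = ‖y‖ := by
        rw [norm_smul, Real.norm_eq_abs]
        rw [abs_of_pos (by norm_num : (0:ℝ) < (2:ℝ)⁻¹)]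
        ring
      have h2 : (2 * ‖((2:ℝ)⁻¹ • y : EuclideanSpace ℝ (Fin 3))‖) • (‖y‖⁻¹ • y) = y := by
        rw [hnorm, smul_smul, mul_inv_cancel₀ hyn, one_smul]
      have hKey := hK u ((2:ℝ)⁻¹ • y) (‖y‖⁻¹ • y) I Is I Is hy' hσ hI hIs hI hIs rfl hpos
      rw [h2] at hKey
      exact hKey
    have hiter : ∀ n : ℕ,
        f (u + z) I * f (u - z) Is
          = f (u + ((2:ℝ)⁻¹) ^ n • z) I * f (u - ((2:ℝ)⁻¹) ^ n • z) Is := by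
      intro n
      induction n with
      | zero => simp
      | succ n ih =>
        have hzn : ((2:ℝ)⁻¹) ^ n • z ≠ 0 := smul_ne_zero (pow_ne_zero _ (by norm_num)) hz
        have hsc : (2:ℝ)⁻¹ • (((2:ℝ)⁻¹) ^ n • z) = ((2:ℝ)⁻¹) ^ (n + 1) • z := by
          rw [smul_smul, ← pow_succ']
        rw [ih, hstep _ hzn, hsc]
    have hz0 : Filter.Tendsto (fun n : ℕ => ((2:ℝ)⁻¹) ^ n • z) Filter.atTop (nhds 0) := by
      have h1 : Filter.Tendsto (fun n : ℕ => ((2:ℝ)⁻¹) ^ n) Filter.atTop (nhds 0) :=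
        tendsto_pow_atTop_nhds_zero_of_lt_one (by norm_num) (by norm_num)
      simpa using h1.smul_const z
    have hplus : Filter.Tendsto (fun n : ℕ => u + ((2:ℝ)⁻¹) ^ n • z) Filter.atTop (nhds u) := by
      simpa using (tendsto_const_nhds (x := u) (f := Filter.atTop (α := ℕ))).add hz0
    have hminus : Filter.Tendsto (fun n : ℕ => u - ((2:ℝ)⁻¹) ^ n • z) Filter.atTop (nhds u) := by
      simpa using (tendsto_const_nhds (x := u) (f := Filter.atTop (α := ℕ))).sub hz0
    have hten : Filter.Tendsto
        (fun n : ℕ => f (u + ((2:ℝ)⁻¹) ^ n • z) I * f (u - ((2:ℝ)⁻¹) ^ n • z) Is)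
        Filter.atTop (nhds (f u I * f u Is)) :=
      (((hfc1 I hI).tendsto u).comp hplus).mul (((hfc1 Is hIs).tendsto u).comp hminus)
    have hconstTen : Filter.Tendsto (fun _ : ℕ => f (u + z) I * f (u - z) Is)
        Filter.atTop (nhds (f u I * f u Is)) :=
      hten.congr (fun n => (hiter n).symm)
    exact tendsto_nhds_unique tendsto_const_nhds hconstTen
  -- Local constancy of `f u ·` on `(0, ∞)`, via the ε-slack in quasi-resonance.
  have hloc : ∀ (u : EuclideanSpace ℝ (Fin 3)) (I : ℝ), 0 < I →
      ∃ δ > 0, ∀ J, 0 < J → |J - I| < δ → f u J = f u I := by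
    intro u I hI
    set w : EuclideanSpace ℝ (Fin 3) := EuclideanSpace.single 0 (1:ℝ) with hw_def
    have hwnorm : ‖w‖ = 1 := by
      rw [hw_def, EuclideanSpace.norm_single, norm_one]
    have hw : w ≠ 0 := by
      intro h
      rw [h, norm_zero] at hwnorm
      norm_num at hwnorm
    set E : ℝ := m + I with hE_def
    have hEI : I < E := by rw [hE_def]; linarith
    have hEpos : 0 < E := by linarith
    set R0 : ℝ := 1 - I / E with hR0_def
    have hR0mem : R0 ∈ Ioo (0:ℝ) 1 := by
      constructor
      · have : I / E < 1 := (div_lt_one hEpos).mpr hEI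
        simp only [hR0_def]; linarith
      · have : 0 < I / E := div_pos hI hEpos
        simp only [hR0_def]; linarith
    have hηcont : ContinuousAt η R0 := (hη_deriv R0 hR0mem).continuousAt
    obtain ⟨δ₁, hδ₁, hδ₁p⟩ := Metric.continuousAt_iff.mp hηcont ε hε
    refine ⟨min (δ₁ * E) (E - I), lt_min (mul_pos hδ₁ hEpos) (by linarith), ?_⟩
    intro J hJ hJd
    have hJd1 : |J - I| < δ₁ * E := lt_of_lt_of_le hJd (min_le_left _ _)
    have hJd2 : |J - I| < E - I := lt_of_lt_of_le hJd (min_le_right _ _)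
    have hJE : J < E := by
      have := abs_lt.mp hJd2
      linarith [this.1, this.2]
    -- the collision
    have hcolEq : colE m (u + w) (u - w) I 0 = E := by
      rw [hcolE, hwnorm, hE_def]; ring
    have hRpost : Rpost m (u + w) (u - w) I 0 (J) 0 = 1 - J / E := by
      rw [Rpost, hcolEq, add_zero]
    have hRpre : Rpre m (u + w) (u - w) I 0 = R0 := by
      rw [Rpre, hcolEq, add_zero, hR0_def]
    have hQR : QuasiResonant m ε η (u + w) (u - w) I 0 J 0 := by
      refine ⟨by rw [hcolEq]; exact hEpos, by rw [hcolEq]; linarith, ?_, ?_, ?_⟩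
      · rw [hRpost]
        have h1 : J / E < 1 := (div_lt_one hEpos).mpr hJE
        have h2 : 0 < J / E := div_pos hJ hEpos
        exact mem_Ioo.mpr ⟨by linarith, by linarith⟩
      · rw [hRpre]; exact hR0mem
      · rw [hRpost, hRpre]
        have hdist : dist (1 - J / E) R0 < δ₁ := by
          rw [Real.dist_eq, hR0_def]
          have : (1 - J / E) - (1 - I / E) = (I - J) / E := by field_simp; ring
          rw [this, abs_div, abs_of_pos hEpos]
          rw [div_lt_iff₀ hEpos]
          have : |I - J| = |J - I| := abs_sub_comm I J
          rw [this]
          exact hJd1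
        have := hδ₁p hdist
        rw [Real.dist_eq] at this
        exact this.le
    have heq := hf_eq (u + w) (u - w) I 0 J 0 w hI.le le_rfl hJ.le le_rfl hwnorm hQR
    set c : ℝ := 2 / Real.sqrt m * Real.sqrt (colE m (u + w) (u - w) I 0 - (J + 0)) with hc_def
    have hv1 : vPost m (u + w) (u - w) I 0 J 0 w = u + c • w := by
      rw [vPost, hc_def]; module
    have hv2 : vPostStar m (u + w) (u - w) I 0 J 0 w = u - c • w := by
      rw [vPostStar, hc_def]; module
    rw [hv1, hv2] at heq
    rw [hL1 u (c • w) J 0 hJ.le le_rfl (by linarith), hL1 u w I 0 hI.le le_rfl (by linarith)]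
      at heq
    exact mul_right_cancel₀ (ne_of_gt (hf_pos u 0 le_rfl)) heq
  -- `f u ·` is constant on `(0, ∞)`.
  have hconst : ∀ (u : EuclideanSpace ℝ (Fin 3)) (I : ℝ), 0 < I → f u I = f u 1 := by
    intro u
    haveI : PreconnectedSpace (Ioi (0:ℝ)) := Subtype.preconnectedSpace isPreconnected_Ioi
    have hlc : IsLocallyConstant (fun x : Ioi (0:ℝ) => f u x) := by
      rw [IsLocallyConstant.iff_exists_open]
      rintro ⟨x, hx⟩
      obtain ⟨δ, hδ, hδp⟩ := hloc u x hx
      refine ⟨Subtype.val ⁻¹' Metric.ball x δ,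
        Metric.isOpen_ball.preimage continuous_subtype_val, ?_, ?_⟩
      · simp [Metric.mem_ball, hδ]
      · rintro ⟨y, hy⟩ hmem
        simp only [mem_preimage, Metric.mem_ball, Real.dist_eq] at hmem
        have h1 : f u y = f u x := hδp y hy hmem
        simpa using h1
    intro I hI
    exact hlc.apply_eq_of_preconnectedSpace ⟨I, hI⟩ ⟨1, by norm_num⟩
  have hL3 : ∀ (u : EuclideanSpace ℝ (Fin 3)) (I : ℝ), 0 ≤ I → f u I = f u 0 := by
    intro u I hI
    have h0 : f u 0 = f u 1 := by
      have hc : ContinuousWithinAt (fun I => f u I) (Ici (0:ℝ)) 0 :=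
        (hfc2 u) 0 self_mem_Ici
      have hseqlim : Filter.Tendsto (fun n : ℕ => ((n : ℝ) + 1)⁻¹)
          Filter.atTop (nhdsWithin 0 (Ici (0:ℝ))) := by
        apply tendsto_nhdsWithin_of_tendsto_nhds_of_eventually_within
        · exact tendsto_one_div_add_atTop_nhds_zero_nat.congr (fun n => by
            rw [one_div])
        · exact Filter.Eventually.of_forall (fun n => mem_Ici.mpr (by positivity))
      have hseq : Filter.Tendsto (fun n : ℕ => f u (((n : ℝ) + 1)⁻¹))
          Filter.atTop (nhds (f u 0)) := hc.tendsto.comp hseqlim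
      have hconstseq : ∀ n : ℕ, f u (((n : ℝ) + 1)⁻¹) = f u 1 := fun n =>
        hconst u _ (by positivity)
      have : Filter.Tendsto (fun _ : ℕ => f u 1) Filter.atTop (nhds (f u 0)) :=
        hseq.congr hconstseq
      exact tendsto_nhds_unique this tendsto_const_nhds
    rcases hI.lt_or_eq with h | h
    · exact (hconst u I h).trans h0.symm
    · rw [← h]
  -- The Jensen (midpoint) functional equation for `G = log (f · 0)`.
  have hGpos : ∀ v : EuclideanSpace ℝ (Fin 3), 0 < f v 0 := fun v => hf_pos v 0 le_rfl
  have hJen : ∀ u z : EuclideanSpace ℝ (Fin 3),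
      f (u + z) 0 * f (u - z) 0 = f u 0 * f u 0 := by
    intro u z
    have h := hL1 u z 1 1 one_pos.le one_pos.le (by norm_num)
    rwa [hL3 (u + z) 1 one_pos.le, hL3 (u - z) 1 one_pos.le, hL3 u 1 one_pos.le] at h
  set G : EuclideanSpace ℝ (Fin 3) → ℝ := fun v => Real.log (f v 0) with hG_def
  have hGc : Continuous G := ((hfc1 0 le_rfl).log (fun v => (hGpos v).ne'))
  have hGJ : ∀ u z, G (u + z) + G (u - z) = G u + G u := by
    intro u z
    have h := congrArg Real.log (hJen u z)
    rwa [Real.log_mul (hGpos _).ne' (hGpos _).ne',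
      Real.log_mul (hGpos _).ne' (hGpos _).ne'] at h
  have hmidG : ∀ x y : EuclideanSpace ℝ (Fin 3),
      G x + G y = 2 * G ((2:ℝ)⁻¹ • (x + y)) := by
    intro x y
    have h := hGJ ((2:ℝ)⁻¹ • (x + y)) ((2:ℝ)⁻¹ • (x - y))
    have e1 : (2:ℝ)⁻¹ • (x + y) + (2:ℝ)⁻¹ • (x - y) = x := by module
    have e2 : (2:ℝ)⁻¹ • (x + y) - (2:ℝ)⁻¹ • (x - y) = y := by module
    rw [e1, e2] at h
    linarith
  set L : EuclideanSpace ℝ (Fin 3) → ℝ := fun v => G v - G 0 with hL_def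
  have hLadd : ∀ x y, L (x + y) = L x + L y := by
    intro x y
    have h1 := hmidG x y
    have h2 := hmidG (x + y) 0
    rw [add_zero] at h2
    simp only [hL_def]
    linarith
  have hLc : Continuous L := hGc.sub continuous_const
  set Lhom : EuclideanSpace ℝ (Fin 3) →+ ℝ := AddMonoidHom.mk' L hLadd with hLhom_def
  have hLhomc : Continuous Lhom := hLc
  set Lc := Lhom.toRealLinearMap hLhomc with hLc_def
  have hLcL : ∀ v, Lc v = L v := fun v => rfl
  set p := (InnerProductSpace.toDual ℝ (EuclideanSpace ℝ (Fin 3))).symm Lc with hp_def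
  have hp : ∀ v, (inner ℝ p v : ℝ) = L v := by
    intro v
    rw [hp_def]
    rw [InnerProductSpace.toDual_symm_apply]
    exact hLcL v
  refine ⟨f 0 0, 0, p, hf_pos 0 0 le_rfl, ?_⟩
  intro v I hI
  rw [hL3 v I hI]
  have h1 : f v 0 = Real.exp (G v) := (Real.exp_log (hGpos v)).symm
  have h2 : G v = G 0 + L v := by simp only [hL_def]; ring
  have h3 : f 0 0 = Real.exp (G 0) := (Real.exp_log (hGpos 0)).symm
  rw [h1, h2, h3, ← Real.exp_add, hp v]
  ring_nf
end
end

section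
/- Fix E>0 and R'∈(0,1). Let η:(0,1)→ℝ be a C¹ diffeomorphism onto ℝ with everywhere positive derivative, and let c_η:(0,1)²→ℝ be continuous with c_η(R,R)=η'(R) for all R∈(0,1). Let Ψ:(0,∞)²→ℝ be continuous with compact support. Then, as ε→0⁺, the quantity J_ε := (1/(2ε))·∬_{{(I',I'*)∈(0,∞)² : I'+I'*<E}} c_η(1−(I'+I'*)/E, R')·1_{|η(1−(I'+I'*)/E)−η(R')|≤ε}·Ψ(I',I'*) dI' dI'* converges to J₀ := E·∫₀^{(1−R')E} Ψ(I', (1−R')E−I') dI'. (Resonant asymptotics of the quasi-resonant collision kernels: applied with Ψ(I',I'*)=B(v,v*,I,I*,I',I'*,σ)·ψ(I',I'*)·φ(I')·φ(I'*) for a continuous reference kernel B, a compactly supported continuous test function ψ and a continuous internal energy density φ, with E=(m/4)‖v−v*‖²+I+I* and R'=1−(I+I*)/E, this is Proposition 2.4 of the paper, identifying the limiting resonant kernel B^res(v,v*,I,I*,I',σ)=B(v,v*,I,I*,I',I+I*−I',σ)·E·1_{I'≤I+I*}.) -/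
open Set MeasureTheory Filter Topology

noncomputable section

/- Auxiliary lemmas -/
lemma sym_quot {g : ℝ → ℝ} {a d : ℝ} (hg : HasDerivAt g d a) :
    Tendsto (fun ε : ℝ => (g (a + ε) - g (a - ε)) / (2 * ε)) (𝓝[>] 0) (𝓝 d) := by
  have hslope := hasDerivAt_iff_tendsto_slope.1 hg
  have t1 : Tendsto (fun ε : ℝ => a + ε) (𝓝[>] (0:ℝ)) (𝓝[≠] a) := by
    apply tendsto_nhdsWithin_of_tendsto_nhds_of_eventually_within
    · have : Tendsto (fun ε : ℝ => a + ε) (𝓝 (0:ℝ)) (𝓝 (a + 0)) :=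
        (continuous_const.add continuous_id).tendsto 0
      simpa using this.mono_left nhdsWithin_le_nhds
    · filter_upwards [self_mem_nhdsWithin] with ε (hε : 0 < ε)
      simp [hε.ne']
  have t2 : Tendsto (fun ε : ℝ => a - ε) (𝓝[>] (0:ℝ)) (𝓝[≠] a) := by
    apply tendsto_nhdsWithin_of_tendsto_nhds_of_eventually_within
    · have : Tendsto (fun ε : ℝ => a - ε) (𝓝 (0:ℝ)) (𝓝 (a - 0)) :=
        (continuous_const.sub continuous_id).tendsto 0
      simpa using this.mono_left nhdsWithin_le_nhds
    · filter_upwards [self_mem_nhdsWithin] with ε (hε : 0 < ε)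
      simp [sub_eq_self, hε.ne']
  have h1 := hslope.comp t1
  have h2 := hslope.comp t2
  have h3 : Tendsto (fun ε : ℝ => (slope g a (a + ε) + slope g a (a - ε)) / 2) (𝓝[>] (0:ℝ))
      (𝓝 ((d + d) / 2)) := (h1.add h2).div_const 2
  have h4 : (d + d) / 2 = d := by ring
  rw [h4] at h3
  refine h3.congr' ?_
  filter_upwards [self_mem_nhdsWithin] with ε (hε : 0 < ε)
  rw [slope_def_field, slope_def_field]
  have h5 : a + ε - a = ε := by ring
  have h6 : a - ε - a = -ε := by ring
  rw [h5, h6, div_neg, ← sub_eq_add_neg, ← sub_div,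
    show g (a + ε) - g a - (g (a - ε) - g a) = g (a + ε) - g (a - ε) by ring,
    div_div, mul_comm ε 2]

lemma inv_strictMono {η g : ℝ → ℝ} (hmono : StrictMonoOn η (Ioo 0 1))
    (hmem : ∀ u, g u ∈ Ioo (0:ℝ) 1) (hright : ∀ u, η (g u) = u) : StrictMono g := by
  intro u v huv
  rcases lt_trichotomy (g u) (g v) with h | h | h
  · exact h
  · exact absurd (by rw [← hright u, ← hright v, h]) huv.ne
  · have : v < u := by rw [← hright u, ← hright v]; exact hmono (hmem v) (hmem u) h
    exact absurd this huv.asymm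

lemma inv_leftInv {η g : ℝ → ℝ} (hmono : StrictMonoOn η (Ioo 0 1))
    (hmem : ∀ u, g u ∈ Ioo (0:ℝ) 1) (hright : ∀ u, η (g u) = u) :
    ∀ R ∈ Ioo (0:ℝ) 1, g (η R) = R := by
  intro R hR
  exact hmono.injOn (hmem (η R)) hR (hright (η R))

lemma inv_continuous {η g : ℝ → ℝ} (hmono : StrictMonoOn η (Ioo 0 1))
    (hmem : ∀ u, g u ∈ Ioo (0:ℝ) 1) (hright : ∀ u, η (g u) = u) : Continuous g := by
  have hsm := inv_strictMono hmono hmem hright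
  have hli := inv_leftInv hmono hmem hright
  rw [continuous_iff_continuousAt]
  intro u
  rw [ContinuousAt, tendsto_order]
  constructor
  · intro b hb
    set c : ℝ := max b (g u / 2) with hc
    have hc0 : 0 < c := lt_max_of_lt_right (by linarith [(hmem u).1])
    have hcu : c < g u := max_lt hb (by linarith [(hmem u).1])
    have hc1 : c < 1 := hcu.trans (hmem u).2
    have hcmem : c ∈ Ioo (0:ℝ) 1 := ⟨hc0, hc1⟩
    have hηc : η c < u := by
      rw [← hright u]; exact hmono hcmem (hmem u) hcu
    filter_upwards [Ioi_mem_nhds hηc] with v (hv : η c < v)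
    calc b ≤ c := le_max_left _ _
      _ = g (η c) := (hli c hcmem).symm
      _ < g v := hsm hv
  · intro b hb
    set c : ℝ := min b ((g u + 1) / 2) with hc
    have hc1 : c < 1 := min_lt_of_right_lt (by linarith [(hmem u).2])
    have hcu : g u < c := lt_min hb (by linarith [(hmem u).2])
    have hc0 : 0 < c := (hmem u).1.trans hcu
    have hcmem : c ∈ Ioo (0:ℝ) 1 := ⟨hc0, hc1⟩
    have hηc : u < η c := by
      rw [← hright u]; exact hmono (hmem u) hcmem hcu
    filter_upwards [Iio_mem_nhds hηc] with v (hv : v < η c)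
    calc g v < g (η c) := hsm hv
      _ = c := hli c hcmem
      _ ≤ b := min_le_left _ _

lemma F_props {Ψ : ℝ → ℝ → ℝ} (hΨ_cont : Continuous fun p : ℝ × ℝ => Ψ p.1 p.2)
    (hΨ_supp : HasCompactSupport fun p : ℝ × ℝ => Ψ p.1 p.2) :
    Continuous (fun s : ℝ => ∫ t : ℝ, Ψ t (s - t)) := by
  obtain ⟨M, hM⟩ := hΨ_supp.exists_bound_of_continuous hΨ_cont
  obtain ⟨L, hL0, hLsub⟩ : ∃ L : ℝ, 0 < L ∧
      tsupport (fun p : ℝ × ℝ => Ψ p.1 p.2) ⊆ Metric.closedBall 0 L := by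
    obtain ⟨L, hLsub⟩ := hΨ_supp.isBounded.subset_closedBall 0
    exact ⟨max L 1, by positivity, hLsub.trans (Metric.closedBall_subset_closedBall (le_max_left _ _))⟩
  have hM0 : 0 ≤ M := le_trans (norm_nonneg _) (hM (0, 0))
  rw [continuous_iff_continuousAt]
  intro s₀
  apply continuousAt_of_dominated (bound := (Icc (-L) L).indicator fun _ => M)
  · filter_upwards with s
    exact (hΨ_cont.comp (continuous_id.prodMk (continuous_const.sub continuous_id))).aestronglyMeasurable
  · filter_upwards with s
    filter_upwards with t
    by_cases ht : t ∈ Icc (-L) L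
    · rw [indicator_of_mem ht]
      exact hM (t, s - t)
    · rw [indicator_of_notMem ht]
      have : (t, s - t) ∉ tsupport (fun p : ℝ × ℝ => Ψ p.1 p.2) := by
        intro hmem
        have := hLsub hmem
        rw [Metric.mem_closedBall, dist_zero_right, Prod.norm_def] at this
        exact ht ⟨by simpa using (neg_le_of_abs_le ((le_max_left _ _).trans this)),
          by simpa using (le_of_abs_le ((le_max_left _ _).trans this))⟩
      simpa using image_eq_zero_of_notMem_tsupport this
  · rw [integrable_indicator_iff measurableSet_Icc]
    exact integrableOn_const (by simp [Real.volume_Icc])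
  · filter_upwards with t
    exact (hΨ_cont.comp (continuous_const.prodMk (continuous_id.sub continuous_const))).continuousAt

/-- **Resonant asymptotics of the quasi-resonant collision kernels** (Proposition 2.4).
Fix `E > 0`, `R' ∈ (0,1)`. For `η : (0,1) → ℝ` a C¹ diffeomorphism onto `ℝ` with positive
derivative `η'`, a continuous normalizing factor `c_η` with `c_η(R,R) = η'(R)`, and a
continuous compactly supported `Ψ : (0,∞)² → ℝ`, the quantity
`J_ε = (1/(2ε))·∬_{I'+I'*<E} c_η(1-(I'+I'*)/E, R')·1_{|η(1-(I'+I'*)/E)-η(R')|≤ε}·Ψ(I',I'*)`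
converges, as `ε → 0⁺`, to `J₀ = E·∫₀^{(1-R')E} Ψ(I', (1-R')E - I') dI'`. -/
theorem resonant_asymptotics
    (E R' : ℝ) (hE : 0 < E) (hR' : R' ∈ Ioo (0 : ℝ) 1)
    (η η' : ℝ → ℝ)
    (hη_deriv : ∀ R ∈ Ioo (0 : ℝ) 1, HasDerivAt η (η' R) R)
    (hη'_cont : ContinuousOn η' (Ioo (0 : ℝ) 1))
    (hη'_pos : ∀ R ∈ Ioo (0 : ℝ) 1, 0 < η' R)
    (hη_bij : BijOn η (Ioo (0 : ℝ) 1) univ)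
    (cη : ℝ → ℝ → ℝ)
    (hcη_cont : ContinuousOn (fun p : ℝ × ℝ => cη p.1 p.2) (Ioo (0 : ℝ) 1 ×ˢ Ioo (0 : ℝ) 1))
    (hcη_diag : ∀ R ∈ Ioo (0 : ℝ) 1, cη R R = η' R)
    (Ψ : ℝ → ℝ → ℝ)
    (hΨ_cont : Continuous fun p : ℝ × ℝ => Ψ p.1 p.2)
    (hΨ_supp : HasCompactSupport fun p : ℝ × ℝ => Ψ p.1 p.2)
    (hΨ_supp_in : tsupport (fun p : ℝ × ℝ => Ψ p.1 p.2) ⊆ Ioi (0 : ℝ) ×ˢ Ioi (0 : ℝ)) :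
    Tendsto (fun ε : ℝ =>
        (1 / (2 * ε)) * ∫ p in {q : ℝ × ℝ | 0 < q.1 ∧ 0 < q.2 ∧ q.1 + q.2 < E},
          cη (1 - (p.1 + p.2) / E) R' *
            (if |η (1 - (p.1 + p.2) / E) - η R'| ≤ ε then (1 : ℝ) else 0) * Ψ p.1 p.2)
      (𝓝[>] 0)
      (𝓝 (E * ∫ I' in Ioo (0 : ℝ) ((1 - R') * E), Ψ I' ((1 - R') * E - I'))) := by

  obtain ⟨hR'0, hR'1⟩ := hR'
  set s₀ : ℝ := (1 - R') * E with hs₀def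
  set a' : ℝ := η R' with ha'def
  -- basic monotonicity of η
  have hη_mono : StrictMonoOn η (Ioo 0 1) := by
    apply strictMonoOn_of_deriv_pos (convex_Ioo 0 1)
      (fun R hR => ((hη_deriv R hR).continuousAt).continuousWithinAt)
    intro x hx
    rw [interior_Ioo] at hx
    rw [(hη_deriv x hx).deriv]
    exact hη'_pos x hx
  -- the inverse function g
  set g : ℝ → ℝ := fun u => Function.invFunOn η (Ioo 0 1) u with hgdef
  have hg_exists : ∀ u : ℝ, ∃ R ∈ Ioo (0:ℝ) 1, η R = u := fun u => hη_bij.2.2 (mem_univ u)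
  have hg_mem : ∀ u, g u ∈ Ioo (0:ℝ) 1 := fun u => Function.invFunOn_mem (hg_exists u)
  have hg_right : ∀ u, η (g u) = u := fun u => Function.invFunOn_eq (hg_exists u)
  have hg_left : ∀ R ∈ Ioo (0:ℝ) 1, g (η R) = R := inv_leftInv hη_mono hg_mem hg_right
  have hg_cont : Continuous g := inv_continuous hη_mono hg_mem hg_right
  have hg_sm : StrictMono g := inv_strictMono hη_mono hg_mem hg_right
  have hgR' : g a' = R' := hg_left R' ⟨hR'0, hR'1⟩
  have hηR'pos : 0 < η' R' := hη'_pos R' ⟨hR'0, hR'1⟩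
  have hg_deriv : HasDerivAt g (η' R')⁻¹ a' :=
    HasDerivAt.of_local_left_inverse hg_cont.continuousAt
      (by rw [hgR']; exact hη_deriv R' ⟨hR'0, hR'1⟩) hηR'pos.ne'
      (Eventually.of_forall hg_right)
  -- F
  set F : ℝ → ℝ := fun s => ∫ t : ℝ, Ψ t (s - t) with hFdef
  have hF_cont : Continuous F := F_props hΨ_cont hΨ_supp
  have hΨ0 : ∀ x y : ℝ, x ≤ 0 ∨ y ≤ 0 → Ψ x y = 0 := by
    intro x y hxy
    have : (x, y) ∉ tsupport (fun p : ℝ × ℝ => Ψ p.1 p.2) := by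
      intro hmem
      obtain ⟨h1, h2⟩ := hΨ_supp_in hmem
      rcases hxy with h | h
      · exact absurd h1 (by simpa using h)
      · exact absurd h2 (by simpa using h)
    exact image_eq_zero_of_notMem_tsupport (f := fun p : ℝ × ℝ => Ψ p.1 p.2) this
  have hs₀mem : s₀ ∈ Ioo 0 E := by
    constructor
    · have : 0 < 1 - R' := by linarith
      positivity
    · nlinarith
  -- rewrite the target
  have htarget : (∫ I' in Ioo (0:ℝ) ((1 - R') * E), Ψ I' ((1 - R') * E - I')) = F s₀ := by
    apply setIntegral_eq_integral_of_forall_compl_eq_zero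
    intro x hx
    rw [mem_Ioo, not_and_or] at hx
    rcases hx with h | h
    · exact hΨ0 _ _ (Or.inl (not_lt.1 h))
    · exact hΨ0 _ _ (Or.inr (by rw [← hs₀def]; linarith [not_lt.1 h]))
  rw [htarget]
  -- the interval endpoints
  set l : ℝ → ℝ := fun ε => g (a' - ε) with hldef
  set r : ℝ → ℝ := fun ε => g (a' + ε) with hrdef
  set aa : ℝ → ℝ := fun ε => (1 - r ε) * E with haadef
  set bb : ℝ → ℝ := fun ε => (1 - l ε) * E with hbbdef
  have hlr : ∀ ε : ℝ, 0 < ε → l ε < r ε := fun ε hε => hg_sm (by linarith)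
  have hlmem : ∀ ε : ℝ, l ε ∈ Ioo (0:ℝ) 1 := fun ε => hg_mem _
  have hrmem : ∀ ε : ℝ, r ε ∈ Ioo (0:ℝ) 1 := fun ε => hg_mem _
  have hab : ∀ ε : ℝ, 0 < ε → aa ε < bb ε := by
    intro ε hε
    have := hlr ε hε
    simp only [haadef, hbbdef]
    nlinarith
  have haapos : ∀ ε : ℝ, 0 < aa ε := by
    intro ε
    have := (hrmem ε).2
    simp only [haadef]
    nlinarith
  have hbblt : ∀ ε : ℝ, bb ε < E := by
    intro ε
    have := (hlmem ε).1
    simp only [hbbdef]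
    nlinarith
  have hIccsub : ∀ ε : ℝ, 0 < ε → Icc (aa ε) (bb ε) ⊆ Ioo 0 E := by
    intro ε hε s hs
    exact ⟨lt_of_lt_of_le (haapos ε) hs.1, lt_of_le_of_lt hs.2 (hbblt ε)⟩
  -- H
  set H : ℝ → ℝ := fun s => cη (1 - s / E) R' * F s with hHdef
  have hmaps : ∀ s ∈ Ioo (0:ℝ) E, (1 - s / E) ∈ Ioo (0:ℝ) 1 := by
    intro s hs
    constructor
    · have : s / E < 1 := (div_lt_one hE).2 hs.2
      linarith
    · have : 0 < s / E := div_pos hs.1 hE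
      linarith
  have hH_cont : ContinuousOn H (Ioo 0 E) := by
    apply ContinuousOn.mul ?_ hF_cont.continuousOn
    have : ContinuousOn (fun s : ℝ => cη (1 - s / E) R') (Ioo 0 E) := by
      apply hcη_cont.comp
        (((continuous_const.sub (continuous_id.div_const E)).prodMk continuous_const).continuousOn)
      intro s hs
      exact ⟨hmaps s hs, hR'0, hR'1⟩
    exact this
  have hHs₀ : H s₀ = η' R' * F s₀ := by
    have h1 : 1 - s₀ / E = R' := by
      rw [hs₀def]
      field_simp
      ring
    rw [hHdef]
    simp only [h1]
    rw [hcη_diag R' ⟨hR'0, hR'1⟩]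
  -- membership characterization
  have hind : ∀ ε : ℝ, 0 < ε → ∀ s ∈ Ioo (0:ℝ) E,
      (|η (1 - s / E) - a'| ≤ ε ↔ s ∈ Icc (aa ε) (bb ε)) := by
    intro ε hε s hs
    have hRmem := hmaps s hs
    rw [abs_le, mem_Icc]
    have h1 : a' - ε ≤ η (1 - s / E) ↔ l ε ≤ 1 - s / E := by
      rw [hldef]
      conv_lhs => rw [← hg_right (a' - ε)]
      exact hη_mono.le_iff_le (hg_mem _) hRmem
    have h2 : η (1 - s / E) ≤ a' + ε ↔ 1 - s / E ≤ r ε := by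
      rw [hrdef]
      conv_lhs => rw [← hg_right (a' + ε)]
      exact hη_mono.le_iff_le hRmem (hg_mem _)
    have h3 : l ε ≤ 1 - s / E ↔ s / E ≤ 1 - l ε := by constructor <;> intro <;> linarith
    have h3' : s / E ≤ 1 - l ε ↔ s ≤ (1 - l ε) * E := div_le_iff₀ hE
    have h4 : 1 - s / E ≤ r ε ↔ 1 - r ε ≤ s / E := by constructor <;> intro <;> linarith
    have h4' : 1 - r ε ≤ s / E ↔ (1 - r ε) * E ≤ s := le_div_iff₀ hE
    constructor
    · rintro ⟨hL, hU⟩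
      exact ⟨h4'.1 (h4.1 (h2.1 (by linarith))), h3'.1 (h3.1 (h1.1 (by linarith)))⟩
    · rintro ⟨hL, hU⟩
      have e1 := h1.2 (h3.2 (h3'.2 hU))
      have e2 := h2.2 (h4.2 (h4'.2 hL))
      constructor <;> linarith
  -- bounds for Ψ
  obtain ⟨M, hM⟩ := hΨ_supp.exists_bound_of_continuous hΨ_cont
  obtain ⟨L, hL0, hLsub⟩ : ∃ L : ℝ, 0 < L ∧
      tsupport (fun p : ℝ × ℝ => Ψ p.1 p.2) ⊆ Metric.closedBall 0 L := by
    obtain ⟨L, hLsub⟩ := hΨ_supp.isBounded.subset_closedBall 0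
    exact ⟨max L 1, by positivity,
      hLsub.trans (Metric.closedBall_subset_closedBall (le_max_left _ _))⟩
  set Q : Set (ℝ × ℝ) := {q : ℝ × ℝ | 0 < q.1 ∧ 0 < q.2 ∧ q.1 + q.2 < E} with hQdef
  have hQm : MeasurableSet Q := by
    have h1 : MeasurableSet {q : ℝ × ℝ | 0 < q.1} := measurableSet_lt measurable_const measurable_fst
    have h2 : MeasurableSet {q : ℝ × ℝ | 0 < q.2} := measurableSet_lt measurable_const measurable_snd
    have h3 : MeasurableSet {q : ℝ × ℝ | q.1 + q.2 < E} :=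
      measurableSet_lt (measurable_fst.add measurable_snd) measurable_const
    have : Q = {q : ℝ × ℝ | 0 < q.1} ∩ ({q : ℝ × ℝ | 0 < q.2} ∩ {q : ℝ × ℝ | q.1 + q.2 < E}) := rfl
    rw [this]
    exact h1.inter (h2.inter h3)
  -- key identity
  have key : ∀ ε : ℝ, 0 < ε →
      (∫ p in Q, cη (1 - (p.1 + p.2) / E) R' *
        (if |η (1 - (p.1 + p.2) / E) - a'| ≤ ε then (1:ℝ) else 0) * Ψ p.1 p.2)
      = ∫ s in Icc (aa ε) (bb ε), H s := by
    intro ε hε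
    set φc : ℝ → ℝ := fun s => cη (1 - (max (aa ε) (min s (bb ε))) / E) R' with hφcdef
    have hable : aa ε ≤ bb ε := (hab ε hε).le
    have hclampIcc : ∀ s : ℝ, max (aa ε) (min s (bb ε)) ∈ Icc (aa ε) (bb ε) := fun s =>
      ⟨le_max_left _ _, max_le hable (min_le_right _ _)⟩
    have hφc_cont : Continuous φc := by
      apply hcη_cont.comp_continuous
        ((continuous_const.sub ((continuous_const.max
          (continuous_id.min continuous_const)).div_const E)).prodMk continuous_const)
      intro s
      exact ⟨hmaps _ (hIccsub ε hε (hclampIcc s)), hR'0, hR'1⟩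
    have hφc_eq : ∀ s ∈ Icc (aa ε) (bb ε), φc s = cη (1 - s / E) R' := by
      intro s hs
      rw [hφcdef]
      simp only [min_eq_left hs.2, max_eq_right hs.1]
    set k : ℝ → ℝ := (Icc (aa ε) (bb ε)).indicator φc with hkdef
    have hk_meas : Measurable k := hφc_cont.measurable.indicator measurableSet_Icc
    obtain ⟨C, hC⟩ :=
      (isCompact_Icc (a := aa ε) (b := bb ε)).exists_bound_of_continuousOn (f := φc) hφc_cont.continuousOn
    have hC0 : (0:ℝ) ≤ max C 0 := le_max_right _ _
    have hk_bound : ∀ s, ‖k s‖ ≤ max C 0 := by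
      intro s
      rw [hkdef]
      by_cases hs : s ∈ Icc (aa ε) (bb ε)
      · rw [indicator_of_mem hs]
        exact (hC s hs).trans (le_max_left _ _)
      · rw [indicator_of_notMem hs]
        simpa using hC0
    have hpoint : ∀ p : ℝ × ℝ, Q.indicator (fun p : ℝ × ℝ => cη (1 - (p.1 + p.2) / E) R' *
        (if |η (1 - (p.1 + p.2) / E) - a'| ≤ ε then (1:ℝ) else 0) * Ψ p.1 p.2) p
        = k (p.1 + p.2) * Ψ p.1 p.2 := by
      intro p
      by_cases hp : p ∈ Q
      · rw [indicator_of_mem hp]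
        obtain ⟨hp1, hp2, hp3⟩ := hp
        have hsIoo : p.1 + p.2 ∈ Ioo (0:ℝ) E := ⟨by linarith, hp3⟩
        by_cases hin : |η (1 - (p.1 + p.2) / E) - a'| ≤ ε
        · have hsIcc := (hind ε hε _ hsIoo).1 hin
          rw [if_pos hin, hkdef, indicator_of_mem hsIcc, hφc_eq _ hsIcc]
          ring
        · have hsIcc : p.1 + p.2 ∉ Icc (aa ε) (bb ε) := fun h => hin ((hind ε hε _ hsIoo).2 h)
          rw [if_neg hin, hkdef, indicator_of_notMem hsIcc]
          ring
      · rw [indicator_of_notMem hp]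
        by_cases hΨz : Ψ p.1 p.2 = 0
        · rw [hΨz]
          ring
        · have hp1 : 0 < p.1 := by
            by_contra h
            exact hΨz (hΨ0 _ _ (Or.inl (not_lt.1 h)))
          have hp2 : 0 < p.2 := by
            by_contra h
            exact hΨz (hΨ0 _ _ (Or.inr (not_lt.1 h)))
          have hp3 : ¬ (p.1 + p.2 < E) := fun h => hp ⟨hp1, hp2, h⟩
          have hout : p.1 + p.2 ∉ Icc (aa ε) (bb ε) := fun h =>
            hp3 (lt_of_le_of_lt h.2 (hbblt ε))
          rw [hkdef, indicator_of_notMem hout]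
          ring
    -- integrability of the sheared function
    have hmeas2 : Measurable (fun z : ℝ × ℝ => k z.2 * Ψ z.1 (z.2 - z.1)) :=
      (hk_meas.comp measurable_snd).mul
        (hΨ_cont.comp (continuous_fst.prodMk (continuous_snd.sub continuous_fst))).measurable
    have hInt2 : Integrable (fun z : ℝ × ℝ => k z.2 * Ψ z.1 (z.2 - z.1)) := by
      set B : Set (ℝ × ℝ) := Icc (-L) L ×ˢ Icc (-(2*L)) (2*L) with hBdef
      have hBm : MeasurableSet B := measurableSet_Icc.prod measurableSet_Icc
      have hsupp : ∀ z : ℝ × ℝ, z ∉ B → k z.2 * Ψ z.1 (z.2 - z.1) = 0 := by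
        intro z hz
        by_cases h : Ψ z.1 (z.2 - z.1) = 0
        · rw [h]
          ring
        · exfalso
          have hmem : (z.1, z.2 - z.1) ∈ tsupport (fun p : ℝ × ℝ => Ψ p.1 p.2) :=
            subset_tsupport _ h
          have hball := hLsub hmem
          rw [Metric.mem_closedBall, dist_zero_right, Prod.norm_def] at hball
          have h1 : |z.1| ≤ L := le_trans (le_max_left _ _) hball
          have h2 : |z.2 - z.1| ≤ L := le_trans (le_max_right _ _) hball
          apply hz
          refine ⟨⟨neg_le_of_abs_le h1, le_of_abs_le h1⟩, ?_⟩
          have h3 : |z.2| ≤ 2 * L := by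
            calc |z.2| = |(z.2 - z.1) + z.1| := by ring_nf
              _ ≤ |z.2 - z.1| + |z.1| := abs_add_le _ _
              _ ≤ 2 * L := by linarith
          exact ⟨neg_le_of_abs_le h3, le_of_abs_le h3⟩
      have hIOB : IntegrableOn (fun z : ℝ × ℝ => k z.2 * Ψ z.1 (z.2 - z.1)) B := by
        apply Measure.integrableOn_of_bounded
        · exact ne_of_lt ((isCompact_Icc.prod isCompact_Icc).measure_lt_top)
        · exact hmeas2.aestronglyMeasurable
        · apply ae_of_all
          intro z
          calc ‖k z.2 * Ψ z.1 (z.2 - z.1)‖ = ‖k z.2‖ * ‖Ψ z.1 (z.2 - z.1)‖ := norm_mul _ _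
            _ ≤ max C 0 * M :=
              mul_le_mul (hk_bound _) (hM (z.1, z.2 - z.1)) (norm_nonneg _) hC0
      have heqB : (fun z : ℝ × ℝ => k z.2 * Ψ z.1 (z.2 - z.1))
          = B.indicator (fun z : ℝ × ℝ => k z.2 * Ψ z.1 (z.2 - z.1)) := by
        funext z
        by_cases hz : z ∈ B
        · rw [indicator_of_mem hz]
        · rw [indicator_of_notMem hz, hsupp z hz]
      rw [heqB]
      exact (integrable_indicator_iff hBm).2 hIOB
    have hInt2' : Integrable (fun z : ℝ × ℝ => k z.2 * Ψ z.1 (z.2 - z.1))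
        ((volume : Measure ℝ).prod volume) := by
      rw [← Measure.volume_eq_prod]
      exact hInt2
    have hmp : MeasurePreserving (fun z : ℝ × ℝ => (z.1, z.1 + z.2))
        ((volume : Measure ℝ).prod volume) ((volume : Measure ℝ).prod volume) :=
      measurePreserving_prod_add volume volume
    have hemb : MeasurableEmbedding (fun z : ℝ × ℝ => (z.1, z.1 + z.2)) :=
      (MeasurableEquiv.shearAddRight ℝ).measurableEmbedding
    calc (∫ p in Q, cη (1 - (p.1 + p.2) / E) R' *
          (if |η (1 - (p.1 + p.2) / E) - a'| ≤ ε then (1:ℝ) else 0) * Ψ p.1 p.2)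
        = ∫ p : ℝ × ℝ, Q.indicator (fun p : ℝ × ℝ => cη (1 - (p.1 + p.2) / E) R' *
            (if |η (1 - (p.1 + p.2) / E) - a'| ≤ ε then (1:ℝ) else 0) * Ψ p.1 p.2) p :=
          (integral_indicator hQm).symm
      _ = ∫ p : ℝ × ℝ, k (p.1 + p.2) * Ψ p.1 p.2 := by
          rw [funext hpoint]
      _ = ∫ p : ℝ × ℝ, (fun z : ℝ × ℝ => k z.2 * Ψ z.1 (z.2 - z.1)) (p.1, p.1 + p.2) := by
          simp only [add_sub_cancel_left]
      _ = ∫ z : ℝ × ℝ, k z.2 * Ψ z.1 (z.2 - z.1) := by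
          rw [Measure.volume_eq_prod]
          exact hmp.integral_comp hemb (fun z : ℝ × ℝ => k z.2 * Ψ z.1 (z.2 - z.1))
      _ = ∫ x : ℝ, ∫ y : ℝ, k y * Ψ x (y - x) := by
          rw [Measure.volume_eq_prod]
          exact integral_prod _ hInt2'
      _ = ∫ y : ℝ, ∫ x : ℝ, k y * Ψ x (y - x) := integral_integral_swap hInt2'
      _ = ∫ y : ℝ, k y * F y := by
          congr 1
          funext y
          exact integral_const_mul _ _
      _ = ∫ y : ℝ, (Icc (aa ε) (bb ε)).indicator (fun s => φc s * F s) y := by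
          congr 1
          funext y
          rw [hkdef, Set.indicator_mul_left]
      _ = ∫ s in Icc (aa ε) (bb ε), φc s * F s := integral_indicator measurableSet_Icc
      _ = ∫ s in Icc (aa ε) (bb ε), H s := by
          apply setIntegral_congr_fun measurableSet_Icc
          intro s hs
          rw [hHdef]
          simp only
          rw [hφc_eq s hs]
  -- limits of the endpoints
  have hsub0 : Tendsto (fun ε : ℝ => a' - ε) (𝓝[>] (0:ℝ)) (𝓝 a') := by
    have h : Tendsto (fun ε : ℝ => a' - ε) (𝓝 (0:ℝ)) (𝓝 (a' - 0)) :=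
      (continuous_const.sub continuous_id).tendsto 0
    simpa using h.mono_left nhdsWithin_le_nhds
  have hadd0 : Tendsto (fun ε : ℝ => a' + ε) (𝓝[>] (0:ℝ)) (𝓝 a') := by
    have h : Tendsto (fun ε : ℝ => a' + ε) (𝓝 (0:ℝ)) (𝓝 (a' + 0)) :=
      (continuous_const.add continuous_id).tendsto 0
    simpa using h.mono_left nhdsWithin_le_nhds
  have hl_tend : Tendsto l (𝓝[>] (0:ℝ)) (𝓝 R') := by
    have := (hg_cont.tendsto a').comp hsub0
    rw [hgR'] at this; exact this
  have hr_tend : Tendsto r (𝓝[>] (0:ℝ)) (𝓝 R') := by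
    have := (hg_cont.tendsto a').comp hadd0
    rw [hgR'] at this; exact this
  have haa_tend : Tendsto aa (𝓝[>] (0:ℝ)) (𝓝 s₀) := by
    have h0 : Tendsto (fun ε : ℝ => (1:ℝ) - r ε) (𝓝[>] (0:ℝ)) (𝓝 (1 - R')) :=
      (tendsto_const_nhds (x := (1:ℝ))).sub hr_tend
    exact h0.mul_const E
  have hbb_tend : Tendsto bb (𝓝[>] (0:ℝ)) (𝓝 s₀) := by
    have h0 : Tendsto (fun ε : ℝ => (1:ℝ) - l ε) (𝓝[>] (0:ℝ)) (𝓝 (1 - R')) :=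
      (tendsto_const_nhds (x := (1:ℝ))).sub hl_tend
    exact h0.mul_const E
  set d : ℝ := (η' R')⁻¹ with hddef
  have hd_pos : 0 < d := inv_pos.2 hηR'pos
  have hq : Tendsto (fun ε : ℝ => (bb ε - aa ε) / (2 * ε)) (𝓝[>] (0:ℝ)) (𝓝 (E * d)) := by
    have h0 : Tendsto (fun ε : ℝ => (g (a' + ε) - g (a' - ε)) / (2 * ε)) (𝓝[>] (0:ℝ)) (𝓝 d) :=
      sym_quot hg_deriv
    have h1 := h0.const_mul E
    apply h1.congr
    intro ε
    rw [haadef, hbbdef, hldef, hrdef]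
    ring
  -- the two pieces
  have hH_int : ∀ ε : ℝ, 0 < ε → IntegrableOn H (Icc (aa ε) (bb ε)) :=
    fun ε hε => (hH_cont.mono (hIccsub ε hε)).integrableOn_compact isCompact_Icc
  have hB : Tendsto (fun ε : ℝ => ((bb ε - aa ε) / (2 * ε)) * H s₀) (𝓝[>] (0:ℝ))
      (𝓝 (E * F s₀)) := by
    have h1 := hq.mul_const (H s₀)
    have h2 : E * d * H s₀ = E * F s₀ := by
      rw [hHs₀, hddef]
      field_simp
    rwa [h2] at h1
  have hA : Tendsto (fun ε : ℝ => (1 / (2 * ε)) * ∫ s in Icc (aa ε) (bb ε), (H s - H s₀))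
      (𝓝[>] (0:ℝ)) (𝓝 0) := by
    rw [Metric.tendsto_nhds]
    intro θ hθ
    set K : ℝ := E * d + 1 with hKdef
    have hK0 : 0 < K := by positivity
    have hθ₀ : 0 < θ / (K + 1) := by positivity
    have hHs₀cont : ContinuousAt H s₀ := hH_cont.continuousAt (isOpen_Ioo.mem_nhds hs₀mem)
    obtain ⟨δ, hδ0, hδ⟩ := Metric.continuousAt_iff.1 hHs₀cont (θ / (K + 1)) hθ₀
    have ev1 : ∀ᶠ ε in 𝓝[>] (0:ℝ), ε ∈ Ioi (0:ℝ) := self_mem_nhdsWithin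
    have ev2 : ∀ᶠ ε in 𝓝[>] (0:ℝ), dist (aa ε) s₀ < δ :=
      haa_tend (Metric.ball_mem_nhds s₀ hδ0)
    have ev3 : ∀ᶠ ε in 𝓝[>] (0:ℝ), dist (bb ε) s₀ < δ :=
      hbb_tend (Metric.ball_mem_nhds s₀ hδ0)
    have ev4 : ∀ᶠ ε in 𝓝[>] (0:ℝ), (bb ε - aa ε) / (2 * ε) < K :=
      hq.eventually_lt_const (by rw [hKdef]; linarith)
    filter_upwards [ev1, ev2, ev3, ev4] with ε hε h2 h3 h4
    rw [Real.dist_eq, sub_zero]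
    have hε' : (0:ℝ) < ε := hε
    have hable : aa ε ≤ bb ε := (hab ε hε').le
    have hsubball : ∀ x ∈ Icc (aa ε) (bb ε), ‖H x - H s₀‖ ≤ θ / (K + 1) := by
      intro x hx
      have hxd : dist x s₀ < δ := by
        rw [Real.dist_eq]
        rw [Real.dist_eq] at h2 h3
        rw [abs_sub_lt_iff]
        rw [abs_sub_lt_iff] at h2 h3
        constructor <;> [linarith [hx.2, h3.1]; linarith [hx.1, h2.2]]
      exact (le_of_lt (hδ hxd))
    have hbound := norm_setIntegral_le_of_norm_le_const
      (μ := volume) (s := Icc (aa ε) (bb ε))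
      (f := fun s => H s - H s₀)
      (by rw [Real.volume_Icc]; exact ENNReal.ofReal_lt_top)
      hsubball
    rw [measureReal_def, Real.volume_Icc, ENNReal.toReal_ofReal (by linarith)] at hbound
    have hpos2 : (0:ℝ) < 2 * ε := by linarith
    have hnn : 0 ≤ (bb ε - aa ε) / (2 * ε) := div_nonneg (by linarith) (by linarith)
    calc |(1 / (2 * ε)) * ∫ s in Icc (aa ε) (bb ε), (H s - H s₀)|
        = (1 / (2 * ε)) * ‖∫ s in Icc (aa ε) (bb ε), (H s - H s₀)‖ := by
          rw [abs_mul, abs_of_pos (by positivity : (0:ℝ) < 1 / (2 * ε))]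
          rfl
      _ ≤ (1 / (2 * ε)) * (θ / (K + 1) * (bb ε - aa ε)) := by
          apply mul_le_mul_of_nonneg_left hbound (by positivity)
      _ = (θ / (K + 1)) * ((bb ε - aa ε) / (2 * ε)) := by ring
      _ ≤ (θ / (K + 1)) * K := mul_le_mul_of_nonneg_left h4.le hθ₀.le
      _ < θ := by
          rw [div_mul_eq_mul_div, div_lt_iff₀ (by linarith)]
          nlinarith
  -- assemble
  have hlim : Tendsto (fun ε : ℝ =>
      (1 / (2 * ε)) * (∫ s in Icc (aa ε) (bb ε), (H s - H s₀)) +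
        ((bb ε - aa ε) / (2 * ε)) * H s₀) (𝓝[>] (0:ℝ)) (𝓝 (E * F s₀)) := by
    have := hA.add hB
    simpa using this
  apply Tendsto.congr' ?_ hlim
  filter_upwards [self_mem_nhdsWithin] with ε (hε : (0:ℝ) < ε)
  have hable : aa ε ≤ bb ε := (hab ε hε).le
  have hsplit : (∫ s in Icc (aa ε) (bb ε), (H s - H s₀))
      = (∫ s in Icc (aa ε) (bb ε), H s) - (bb ε - aa ε) * H s₀ := by
    rw [integral_sub (hH_int ε hε) (integrableOn_const (by
      rw [Real.volume_Icc]; exact ENNReal.ofReal_ne_top))]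
    rw [setIntegral_const, measureReal_def, Real.volume_Icc, ENNReal.toReal_ofReal (by linarith), smul_eq_mul]
  rw [key ε hε, hsplit]
  field_simp
  ring

end
end

section
/- Let η:(0,1)→ℝ be a C^∞ diffeomorphism onto ℝ with everywhere positive derivative, let c_η∈C¹((0,1)²) be symmetric (c_η(x,y)=c_η(y,x)) with c_η(R,R)=η'(R) for all R∈(0,1), and set χ_ε(R,R')=(c_η(R,R')/(2ε))·1_{|η(R)−η(R')|≤ε} for ε>0. Let ψ:(0,1)→ℝ be continuously differentiable and let R₀∈(0,1). Then, as ε→0⁺, ∫₀¹ (R−R₀)·ψ(R)·χ_ε(R,R₀) dR = ε²·(η'(R₀)·ψ'(R₀) − η''(R₀)·ψ(R₀))/(3·η'(R₀)³) + o(ε²); that is, the difference between the integral and the displayed ε²-term is little-o of ε² in the limit ε→0 along (0,∞). -/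
open Set MeasureTheory Filter Topology Asymptotics

noncomputable section

/-- Integrating a little-o bound. -/
lemma integral_isLittleO_core (r : ℝ → ℝ) (n : ℕ)
    (hr : r =o[𝓝 (0:ℝ)] fun s => s ^ n) :
    (fun t => ∫ s in (0:ℝ)..t, r s) =o[𝓝 (0:ℝ)] fun t => t ^ (n+1) := by
  rw [isLittleO_iff] at hr ⊢
  intro c hc
  have h1 := hr hc
  rw [Metric.eventually_nhds_iff] at h1 ⊢
  obtain ⟨δ, hδ, hball⟩ := h1
  refine ⟨δ, hδ, fun t ht => ?_⟩
  have habs : ∀ s ∈ Set.uIoc (0:ℝ) t, ‖r s‖ ≤ c * |t| ^ n := by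
    intro s hs
    have hs' : |s| ≤ |t| := by
      rcases Set.mem_uIoc.1 hs with h' | h'
      · rw [abs_of_pos h'.1]; exact h'.2.trans (le_abs_self t)
      · have ht0 : t < 0 := lt_of_lt_of_le h'.1 h'.2
        rw [abs_of_nonpos h'.2, abs_of_neg ht0]; linarith [h'.1]
    have hd : dist s 0 < δ := by
      rw [Real.dist_eq, sub_zero]
      calc |s| ≤ |t| := hs'
        _ < δ := by simpa [Real.dist_eq] using ht
    have := hball hd
    simp only [Real.norm_eq_abs, abs_pow] at this ⊢
    exact this.trans (by gcongr)
  have := intervalIntegral.norm_integral_le_of_norm_le_const habs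
  simp only [Real.norm_eq_abs, sub_zero] at this ⊢
  calc |∫ s in (0:ℝ)..t, r s| ≤ c * |t| ^ n * |t| := this
    _ = c * |t ^ (n+1)| := by rw [abs_pow]; ring

/-- Second-order Taylor expansion from eventual `HasDerivAt` plus differentiability of the
derivative at the point. -/
lemma taylor_two (f : ℝ → ℝ) (x₀ d2 : ℝ) (f1 : ℝ → ℝ)
    (hf : ∀ᶠ x in 𝓝 x₀, HasDerivAt f (f1 x) x)
    (hf1c : ∀ᶠ x in 𝓝 x₀, ContinuousAt f1 x)
    (hf2 : HasDerivAt f1 d2 x₀) :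
    (fun t => f (x₀ + t) - f x₀ - f1 x₀ * t - d2 * t ^ 2 / 2) =o[𝓝 (0:ℝ)] fun t => t ^ 2 := by
  set r : ℝ → ℝ := fun s => f1 (x₀ + s) - f1 x₀ - d2 * s with hrdef
  have hr : r =o[𝓝 (0:ℝ)] fun s => s ^ 1 := by
    have h0 := hasDerivAt_iff_isLittleO.1 hf2
    have htend : Tendsto (fun s : ℝ => x₀ + s) (𝓝 0) (𝓝 x₀) := by
      simpa using (continuous_add_left x₀).tendsto (0:ℝ)
    have h1 := h0.comp_tendsto htend
    simp only [Function.comp_def] at h1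
    refine (h1.congr ?_ ?_)
    · intro s; simp [hrdef, smul_eq_mul]; ring
    · intro s; simp
  have hcore := integral_isLittleO_core r 1 hr
  refine (Filter.EventuallyEq.symm ?_).trans_isLittleO hcore
  rw [Metric.eventually_nhds_iff] at hf hf1c
  obtain ⟨δ₁, hδ₁, h₁⟩ := hf
  obtain ⟨δ₂, hδ₂, h₂⟩ := hf1c
  have hball : Metric.ball (0:ℝ) (min δ₁ δ₂) ∈ 𝓝 (0:ℝ) := Metric.ball_mem_nhds _ (lt_min hδ₁ hδ₂)
  filter_upwards [hball] with t ht
  have ht' : |t| < min δ₁ δ₂ := by simpa [Real.dist_eq] using ht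
  have hsub : ∀ s ∈ Set.uIcc (0:ℝ) t, dist (x₀ + s) x₀ < min δ₁ δ₂ := by
    intro s hs
    rw [Real.dist_eq, add_sub_cancel_left]
    have : |s| ≤ |t| := by
      rcases Set.mem_uIcc.1 hs with h' | h'
      · rw [abs_of_nonneg h'.1]; exact h'.2.trans (le_abs_self t)
      · rw [abs_of_nonpos h'.2]; linarith [neg_abs_le t, h'.1]
    exact this.trans_lt ht'
  have hcont : ContinuousOn (fun s => f1 (x₀ + s)) (Set.uIcc (0:ℝ) t) := by
    intro s hs
    have hc : ContinuousAt f1 (x₀ + s) := h₂ ((hsub s hs).trans_le (min_le_right _ _))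
    have hc2 : ContinuousAt (fun s : ℝ => f1 (x₀ + s)) s :=
      hc.comp (by fun_prop : Continuous fun s : ℝ => x₀ + s).continuousAt
    exact hc2.continuousWithinAt
  have hint1 : IntervalIntegrable (fun s => f1 (x₀ + s)) volume 0 t :=
    hcont.intervalIntegrable
  have hftc : ∫ s in (0:ℝ)..t, f1 (x₀ + s) = f (x₀ + t) - f x₀ := by
    have := intervalIntegral.integral_eq_sub_of_hasDerivAt
      (f := fun s => f (x₀ + s)) (f' := fun s => f1 (x₀ + s)) (a := (0:ℝ)) (b := t)
      (fun s hs => ?_) hint1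
    · simpa using this
    · have hx : HasDerivAt f (f1 (x₀ + s)) (x₀ + s) :=
        h₁ ((hsub s hs).trans_le (min_le_left _ _))
      have h := hx.comp s ((hasDerivAt_id s).const_add x₀)
      rw [mul_one] at h
      exact h
  have hpoly : IntervalIntegrable (fun s => f1 x₀ + d2 * s) volume 0 t := by
    apply ContinuousOn.intervalIntegrable; fun_prop
  have hsplit : ∫ s in (0:ℝ)..t, r s
      = (∫ s in (0:ℝ)..t, f1 (x₀ + s)) - ∫ s in (0:ℝ)..t, (f1 x₀ + d2 * s) := by
    rw [← intervalIntegral.integral_sub hint1 hpoly]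
    apply intervalIntegral.integral_congr
    intro s _; simp [hrdef]; ring
  have hpval : ∫ s in (0:ℝ)..t, (f1 x₀ + d2 * s) = f1 x₀ * t + d2 * t ^ 2 / 2 := by
    rw [intervalIntegral.integral_add (by apply ContinuousOn.intervalIntegrable; fun_prop)
      (by apply ContinuousOn.intervalIntegrable; fun_prop)]
    rw [intervalIntegral.integral_const, intervalIntegral.integral_const_mul, integral_id]
    simp; ring
  rw [hsplit, hftc, hpval]; ring

/-- Expansion of `t ↦ ∫_{x₀}^{x₀+t} (s-x₀) m(s) ds`. -/
lemma moment_expansion (m : ℝ → ℝ) (x₀ g₂ : ℝ)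
    (hmc : ∀ᶠ x in 𝓝 x₀, ContinuousAt m x)
    (hm : HasDerivAt m g₂ x₀) :
    (fun t => (∫ s in x₀..(x₀ + t), (s - x₀) * m s) - m x₀ * t ^ 2 / 2 - g₂ * t ^ 3 / 3)
      =o[𝓝 (0:ℝ)] fun t => t ^ 3 := by
  set r : ℝ → ℝ := fun u => u * (m (x₀ + u) - m x₀ - g₂ * u) with hrdef
  have hρ : (fun u : ℝ => m (x₀ + u) - m x₀ - g₂ * u) =o[𝓝 (0:ℝ)] fun u => u := by
    have h0 := hasDerivAt_iff_isLittleO.1 hm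
    have htend : Tendsto (fun u : ℝ => x₀ + u) (𝓝 0) (𝓝 x₀) := by
      simpa using (continuous_add_left x₀).tendsto (0:ℝ)
    have h1 := h0.comp_tendsto htend
    simp only [Function.comp_def] at h1
    refine h1.congr (fun u => by simp [smul_eq_mul]; ring) (fun u => by simp)
  have hr : r =o[𝓝 (0:ℝ)] fun u => u ^ 2 := by
    have h2 := (isBigO_refl (fun u : ℝ => u) (𝓝 (0:ℝ))).mul_isLittleO hρ
    refine h2.congr (fun u => rfl) (fun u => by ring)
  have hcore := integral_isLittleO_core r 2 hr
  refine (Filter.EventuallyEq.symm ?_).trans_isLittleO hcore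
  rw [Metric.eventually_nhds_iff] at hmc
  obtain ⟨δ, hδ, hδc⟩ := hmc
  have hball : Metric.ball (0:ℝ) δ ∈ 𝓝 (0:ℝ) := Metric.ball_mem_nhds _ hδ
  filter_upwards [hball] with t ht
  have ht' : |t| < δ := by simpa [Real.dist_eq] using ht
  have hsub : ∀ s ∈ Set.uIcc (0:ℝ) t, dist (x₀ + s) x₀ < δ := by
    intro s hs
    rw [Real.dist_eq, add_sub_cancel_left]
    have : |s| ≤ |t| := by
      rcases Set.mem_uIcc.1 hs with h' | h'
      · rw [abs_of_nonneg h'.1]; exact h'.2.trans (le_abs_self t)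
      · rw [abs_of_nonpos h'.2]; linarith [neg_abs_le t, h'.1]
    exact this.trans_lt ht'
  have hshift : (∫ s in x₀..(x₀ + t), (s - x₀) * m s) = ∫ u in (0:ℝ)..t, u * m (x₀ + u) := by
    have h3 := intervalIntegral.integral_comp_add_right (a := (0:ℝ)) (b := t)
      (fun s => (s - x₀) * m s) x₀
    rw [zero_add, add_comm t x₀] at h3
    rw [← h3]
    apply intervalIntegral.integral_congr
    intro u _; simp [add_comm]
  have hcont : ContinuousOn (fun u : ℝ => u * m (x₀ + u)) (Set.uIcc (0:ℝ) t) := by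
    intro s hs
    have hc : ContinuousAt m (x₀ + s) := hδc (hsub s hs)
    have hc2 : ContinuousAt (fun u : ℝ => u * m (x₀ + u)) s :=
      continuousAt_id.mul (hc.comp (by fun_prop : Continuous fun u : ℝ => x₀ + u).continuousAt)
    exact hc2.continuousWithinAt
  have hint1 : IntervalIntegrable (fun u : ℝ => u * m (x₀ + u)) volume 0 t :=
    hcont.intervalIntegrable
  have hpoly : IntervalIntegrable (fun u : ℝ => m x₀ * u + g₂ * u ^ 2) volume 0 t := by
    apply ContinuousOn.intervalIntegrable; fun_prop
  have hsplit : ∫ u in (0:ℝ)..t, r u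
      = (∫ u in (0:ℝ)..t, u * m (x₀ + u)) - ∫ u in (0:ℝ)..t, (m x₀ * u + g₂ * u ^ 2) := by
    rw [← intervalIntegral.integral_sub hint1 hpoly]
    apply intervalIntegral.integral_congr
    intro u _; simp [hrdef]; ring
  have hpval : ∫ u in (0:ℝ)..t, (m x₀ * u + g₂ * u ^ 2) = m x₀ * t ^ 2 / 2 + g₂ * t ^ 3 / 3 := by
    rw [intervalIntegral.integral_add (by apply ContinuousOn.intervalIntegrable; fun_prop)
      (by apply ContinuousOn.intervalIntegrable; fun_prop)]
    rw [intervalIntegral.integral_const_mul, intervalIntegral.integral_const_mul,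
      integral_id, integral_pow]
    norm_num; ring
  rw [hsplit, hshift, hpval]; ring

/-- **Key Taylor-expansion lemma** (Lemma B.2).
With `χ_ε(R,R₀) = (c_η(R,R₀)/(2ε))·1_{|η(R)-η(R₀)|≤ε}`, for a C¹ function `ψ` on `(0,1)`
and `R₀ ∈ (0,1)`,
`∫₀¹ (R-R₀)·ψ(R)·χ_ε(R,R₀) dR = ε²·(η'(R₀)ψ'(R₀) - η''(R₀)ψ(R₀))/(3η'(R₀)³) + o(ε²)`
as `ε → 0⁺`. -/
theorem truncation_first_moment_expansion
    (η : ℝ → ℝ)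
    (hη_smooth : ContDiffOn ℝ (⊤ : ℕ∞) η (Ioo (0 : ℝ) 1))
    (hη'_pos : ∀ R ∈ Ioo (0 : ℝ) 1, 0 < deriv η R)
    (hη_bij : BijOn η (Ioo (0 : ℝ) 1) univ)
    (cη : ℝ → ℝ → ℝ)
    (hcη_smooth : ContDiffOn ℝ 1 (fun p : ℝ × ℝ => cη p.1 p.2)
      (Ioo (0 : ℝ) 1 ×ˢ Ioo (0 : ℝ) 1))
    (hcη_symm : ∀ x ∈ Ioo (0 : ℝ) 1, ∀ y ∈ Ioo (0 : ℝ) 1, cη x y = cη y x)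
    (hcη_diag : ∀ R ∈ Ioo (0 : ℝ) 1, cη R R = deriv η R)
    (ψ : ℝ → ℝ) (hψ : ContDiffOn ℝ 1 ψ (Ioo (0 : ℝ) 1))
    (R₀ : ℝ) (hR₀ : R₀ ∈ Ioo (0 : ℝ) 1) :
    (fun ε : ℝ =>
        (∫ R in Ioo (0 : ℝ) 1,
          (R - R₀) * ψ R * (cη R R₀ / (2 * ε) * (if |η R - η R₀| ≤ ε then (1 : ℝ) else 0)))
        - ε ^ 2 * (deriv η R₀ * deriv ψ R₀ - deriv (deriv η) R₀ * ψ R₀)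
            / (3 * (deriv η R₀) ^ 3))
      =o[𝓝[>] 0] (fun ε : ℝ => ε ^ 2) := by
  have hIopen : IsOpen (Ioo (0:ℝ) 1) := isOpen_Ioo
  have hmem : Ioo (0:ℝ) 1 ∈ 𝓝 R₀ := hIopen.mem_nhds hR₀
  -- strict monotonicity of η
  have hmono : StrictMonoOn η (Ioo (0:ℝ) 1) :=
    strictMonoOn_of_deriv_pos (convex_Ioo 0 1) hη_smooth.continuousOn
      (fun x hx => hη'_pos x (by rwa [interior_Ioo] at hx))
  -- the inverse function
  set φ : ℝ → ℝ := Function.invFunOn η (Ioo (0:ℝ) 1) with hφdef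
  have hinv := hη_bij.invOn_invFunOn
  have hleft : ∀ R ∈ Ioo (0:ℝ) 1, φ (η R) = R := fun R hR => hinv.1 hR
  have hmemφ : ∀ u : ℝ, φ u ∈ Ioo (0:ℝ) 1 := fun u =>
    Function.invFunOn_mem (hη_bij.surjOn (mem_univ u))
  have hright : ∀ u : ℝ, η (φ u) = u := fun u => hinv.2 (mem_univ u)
  have hφmono : StrictMono φ := by
    intro u v huv
    refine (hmono.lt_iff_lt (hmemφ u) (hmemφ v)).1 ?_
    rw [hright, hright]; exact huv
  have hφcont : ∀ u : ℝ, ContinuousAt φ u := by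
    intro u
    refine (hφmono.strictMonoOn univ).continuousAt_of_image_mem_nhds univ_mem ?_
    refine mem_of_superset (hIopen.mem_nhds (hmemφ u)) ?_
    intro R hR
    exact ⟨η R, mem_univ _, hleft R hR⟩
  -- derivatives of η
  have hηd : ∀ R ∈ Ioo (0:ℝ) 1, HasDerivAt η (deriv η R) R := fun R hR =>
    ((hη_smooth.contDiffAt (hIopen.mem_nhds hR)).differentiableAt (by simp)).hasDerivAt
  have hη'ne : deriv η R₀ ≠ 0 := (hη'_pos R₀ hR₀).ne'
  have hη'cd : ContDiffOn ℝ (⊤ : ℕ∞) (deriv η) (Ioo (0:ℝ) 1) :=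
    hη_smooth.deriv_of_isOpen hIopen (by simp)
  have hη''at : HasDerivAt (deriv η) (deriv (deriv η) R₀) R₀ :=
    ((hη'cd.contDiffAt hmem).differentiableAt (by simp)).hasDerivAt
  have hη'contAt : ∀ R ∈ Ioo (0:ℝ) 1, ContinuousAt (deriv η) R := fun R hR =>
    (hη'cd.continuousOn.continuousAt (hIopen.mem_nhds hR))
  -- derivative of φ
  have hφd : ∀ u : ℝ, HasDerivAt φ ((deriv η (φ u))⁻¹) u := fun u =>
    HasDerivAt.of_local_left_inverse (hφcont u) (hηd _ (hmemφ u))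
      ((hη'_pos _ (hmemφ u)).ne') (Eventually.of_forall hright)
  have hφu₀ : φ (η R₀) = R₀ := hleft R₀ hR₀
  set f1 : ℝ → ℝ := fun u => (deriv η (φ u))⁻¹ with hf1def
  have hf1c : ∀ u : ℝ, ContinuousAt f1 u := fun u =>
    ((hη'contAt _ (hmemφ u)).comp (hφcont u)).inv₀ ((hη'_pos _ (hmemφ u)).ne')
  set d1 : ℝ := (deriv η R₀)⁻¹ with hd1def
  set d2 : ℝ := -(deriv (deriv η) R₀ * (deriv η R₀)⁻¹) / (deriv η R₀) ^ 2 with hd2def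
  have hf2 : HasDerivAt f1 d2 (η R₀) := by
    have h1 : HasDerivAt (deriv η) (deriv (deriv η) R₀) (φ (η R₀)) := by
      rw [hφu₀]; exact hη''at
    have h2 := h1.comp (η R₀) (hφd (η R₀))
    have h3 := h2.inv (show deriv η (φ (η R₀)) ≠ 0 by rw [hφu₀]; exact hη'ne)
    simp only [Function.comp_def] at h3
    rw [hφu₀] at h3
    exact h3
  have hf1u₀ : f1 (η R₀) = d1 := by rw [hf1def]; simp only; rw [hφu₀]
  have hφtaylor := taylor_two φ (η R₀) d2 f1 (Eventually.of_forall hφd)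
    (Eventually.of_forall hf1c) hf2
  set B : ℝ → ℝ := fun ε => φ (η R₀ + ε) - R₀ with hBdef
  set A : ℝ → ℝ := fun ε => φ (η R₀ - ε) - R₀ with hAdef
  have hB : (fun ε => B ε - d1 * ε - d2 * ε ^ 2 / 2) =o[𝓝 (0:ℝ)] fun ε => ε ^ 2 := by
    refine hφtaylor.congr (fun ε => ?_) (fun ε => rfl)
    simp only [hBdef, hφu₀, hf1u₀]
    try ring
  have hA : (fun ε => A ε + d1 * ε - d2 * ε ^ 2 / 2) =o[𝓝 (0:ℝ)] fun ε => ε ^ 2 := by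
    have hneg : Tendsto (fun ε : ℝ => -ε) (𝓝 (0:ℝ)) (𝓝 (0:ℝ)) := by
      simpa using continuous_neg.tendsto (0:ℝ)
    have h1 := hB.comp_tendsto hneg
    simp only [Function.comp_def] at h1
    refine h1.congr (fun ε => ?_) (fun ε => by ring)
    show B (-ε) - d1 * -ε - d2 * (-ε) ^ 2 / 2 = A ε + d1 * ε - d2 * ε ^ 2 / 2
    simp only [hBdef, hAdef, sub_eq_add_neg]
    ring
  have hsq : (fun ε : ℝ => ε ^ 2) =O[𝓝 (0:ℝ)] fun ε => ε := by
    have h := (isLittleO_pow_pow (𝕜 := ℝ) (by norm_num : 1 < 2)).isBigO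
    exact h.congr (fun x => rfl) (fun x => pow_one x)
  have h44 : (fun ε : ℝ => ε ^ 2 * ε ^ 2) =o[𝓝 (0:ℝ)] fun ε => ε ^ 3 :=
    (isLittleO_pow_pow (𝕜 := ℝ) (by norm_num : 3 < 4)).congr (fun x => by ring) (fun x => rfl)
  have hBO : B =O[𝓝 (0:ℝ)] fun ε => ε := by
    have h1 : (fun ε : ℝ => B ε - d1 * ε - d2 * ε ^ 2 / 2) =O[𝓝 (0:ℝ)] fun ε => ε :=
      hB.isBigO.trans hsq
    have h2 : (fun ε : ℝ => d1 * ε) =O[𝓝 (0:ℝ)] fun ε => ε :=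
      (isBigO_refl _ _).const_mul_left d1
    have h3 : (fun ε : ℝ => d2 * ε ^ 2 / 2) =O[𝓝 (0:ℝ)] fun ε => ε := by
      have h4 := (hsq.const_mul_left (d2 / 2))
      exact h4.congr (fun ε => by ring) (fun ε => rfl)
    exact (((h1.add h2).add h3).congr (fun ε => by ring) (fun ε => rfl))
  have hAO : A =O[𝓝 (0:ℝ)] fun ε => ε := by
    have h1 : (fun ε : ℝ => A ε + d1 * ε - d2 * ε ^ 2 / 2) =O[𝓝 (0:ℝ)] fun ε => ε :=
      hA.isBigO.trans hsq
    have h2 : (fun ε : ℝ => -d1 * ε) =O[𝓝 (0:ℝ)] fun ε => ε :=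
      (isBigO_refl _ _).const_mul_left (-d1)
    have h3 : (fun ε : ℝ => d2 * ε ^ 2 / 2) =O[𝓝 (0:ℝ)] fun ε => ε := by
      have h4 := (hsq.const_mul_left (d2 / 2))
      exact h4.congr (fun ε => by ring) (fun ε => rfl)
    exact (((h1.add h2).add h3).congr (fun ε => by ring) (fun ε => rfl))
  have hBt : Tendsto B (𝓝 (0:ℝ)) (𝓝 (0:ℝ)) := hBO.trans_tendsto tendsto_id
  have hAt : Tendsto A (𝓝 (0:ℝ)) (𝓝 (0:ℝ)) := hAO.trans_tendsto tendsto_id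
  -- the weight m and its derivative
  set m : ℝ → ℝ := fun R => ψ R * cη R R₀ with hmdef
  have hprodopen : IsOpen (Ioo (0:ℝ) 1 ×ˢ Ioo (0:ℝ) 1) := hIopen.prod hIopen
  have hmm : (R₀, R₀) ∈ Ioo (0:ℝ) 1 ×ˢ Ioo (0:ℝ) 1 := ⟨hR₀, hR₀⟩
  have hc2d : DifferentiableAt ℝ (fun p : ℝ × ℝ => cη p.1 p.2) (R₀, R₀) :=
    (hcη_smooth.contDiffAt (hprodopen.mem_nhds hmm)).differentiableAt one_ne_zero
  set D := fderiv ℝ (fun p : ℝ × ℝ => cη p.1 p.2) (R₀, R₀) with hDdef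
  have hD : HasFDerivAt (fun p : ℝ × ℝ => cη p.1 p.2) D (R₀, R₀) := hc2d.hasFDerivAt
  have hswap : D (1, 0) = D (0, 1) := by
    set σ : ℝ × ℝ →L[ℝ] ℝ × ℝ :=
      (ContinuousLinearMap.snd ℝ ℝ ℝ).prod (ContinuousLinearMap.fst ℝ ℝ ℝ) with hσdef
    have hσd : HasFDerivAt (fun p : ℝ × ℝ => σ p) σ (R₀, R₀) := σ.hasFDerivAt
    have hcomp : HasFDerivAt (fun p : ℝ × ℝ => cη p.2 p.1) (D.comp σ) (R₀, R₀) :=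
      by
        have hD2 : HasFDerivAt (fun p : ℝ × ℝ => cη p.1 p.2) D (σ (R₀, R₀)) := by
          simpa [hσdef] using hD
        exact hD2.comp (R₀, R₀) hσd
    have heq : (fun p : ℝ × ℝ => cη p.1 p.2) =ᶠ[𝓝 ((R₀ : ℝ), (R₀ : ℝ))]
        (fun p : ℝ × ℝ => cη p.2 p.1) := by
      filter_upwards [hprodopen.mem_nhds hmm] with p hp
      exact hcη_symm p.1 hp.1 p.2 hp.2
    have hD' : HasFDerivAt (fun p : ℝ × ℝ => cη p.1 p.2) (D.comp σ) (R₀, R₀) :=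
      hcomp.congr_of_eventuallyEq heq
    have huniq : D = D.comp σ := hD.unique hD'
    have happ := congrArg (fun (L : ℝ × ℝ →L[ℝ] ℝ) => L ((1:ℝ), (0:ℝ))) huniq
    simpa [hσdef] using happ
  have hdiagD : HasDerivAt (fun R => cη R R) (D (1, 1)) R₀ := by
    have hid : HasDerivAt (fun R : ℝ => (R, R)) ((1:ℝ), (1:ℝ)) R₀ :=
      (hasDerivAt_id R₀).prodMk (hasDerivAt_id R₀)
    exact HasFDerivAt.comp_hasDerivAt (f := fun R : ℝ => (R, R)) R₀ hD hid
  have hdiag_eq : (fun R => cη R R) =ᶠ[𝓝 R₀] deriv η := by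
    filter_upwards [hmem] with R hR; exact hcη_diag R hR
  have hD11 : D (1, 1) = deriv (deriv η) R₀ :=
    (hdiagD.congr_of_eventuallyEq hdiag_eq.symm).unique hη''at
  have hD10 : D (1, 0) = deriv (deriv η) R₀ / 2 := by
    have h11 : D (1, 1) = D (1, 0) + D (0, 1) := by
      rw [show ((1:ℝ), (1:ℝ)) = ((1:ℝ), (0:ℝ)) + ((0:ℝ), (1:ℝ)) by norm_num, map_add]
    rw [← hswap, hD11] at h11
    linarith
  have hsec : HasDerivAt (fun R => cη R R₀) (D (1, 0)) R₀ := by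
    have hidc : HasDerivAt (fun R : ℝ => (R, R₀)) ((1:ℝ), (0:ℝ)) R₀ :=
      (hasDerivAt_id R₀).prodMk (hasDerivAt_const R₀ R₀)
    exact HasFDerivAt.comp_hasDerivAt (f := fun R : ℝ => (R, R₀)) R₀ hD hidc
  have hψd : HasDerivAt ψ (deriv ψ R₀) R₀ :=
    ((hψ.contDiffAt hmem).differentiableAt one_ne_zero).hasDerivAt
  set g₂ : ℝ := deriv ψ R₀ * deriv η R₀ + ψ R₀ * (deriv (deriv η) R₀ / 2) with hg₂def
  have hmd' : HasDerivAt m g₂ R₀ := by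
    have hmd : HasDerivAt m (deriv ψ R₀ * cη R₀ R₀ + ψ R₀ * D (1, 0)) R₀ := hψd.mul hsec
    rw [hcη_diag R₀ hR₀, hD10] at hmd
    exact hmd
  have hmc : ∀ᶠ x in 𝓝 R₀, ContinuousAt m x := by
    filter_upwards [hmem] with x hx
    have hψc : ContinuousAt ψ x := hψ.continuousOn.continuousAt (hIopen.mem_nhds hx)
    have hcc : ContinuousAt (fun R => cη R R₀) x := by
      have h2 : ContinuousAt (fun p : ℝ × ℝ => cη p.1 p.2) (x, R₀) :=
        hcη_smooth.continuousOn.continuousAt (hprodopen.mem_nhds ⟨hx, hR₀⟩)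
      have hpair : ContinuousAt (fun R : ℝ => (R, R₀)) x :=
        (continuous_id.prodMk continuous_const).continuousAt
      exact ContinuousAt.comp (x := x) (f := fun R : ℝ => (R, R₀)) h2 hpair
    rw [hmdef]
    exact hψc.mul hcc
  have hm0 : m R₀ = ψ R₀ * deriv η R₀ := by
    show ψ R₀ * cη R₀ R₀ = ψ R₀ * deriv η R₀
    rw [hcη_diag R₀ hR₀]
  set P : ℝ → ℝ := fun t => ∫ s in R₀..(R₀ + t), (s - R₀) * m s with hPdef
  have hP : (fun t => P t - m R₀ * t ^ 2 / 2 - g₂ * t ^ 3 / 3) =o[𝓝 (0:ℝ)] fun t => t ^ 3 := by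
    have h := moment_expansion m R₀ g₂ hmc hmd'
    simp only [hPdef]
    exact h
  have hPB : (fun ε => P (B ε) - m R₀ * B ε ^ 2 / 2 - g₂ * B ε ^ 3 / 3)
      =o[𝓝 (0:ℝ)] fun ε => ε ^ 3 := by
    have h1 := hP.comp_tendsto hBt
    refine (h1.trans_isBigO ?_).congr (fun ε => rfl) (fun ε => rfl)
    exact (hBO.pow 3).congr (fun ε => rfl) (fun ε => rfl)
  have hPA : (fun ε => P (A ε) - m R₀ * A ε ^ 2 / 2 - g₂ * A ε ^ 3 / 3)
      =o[𝓝 (0:ℝ)] fun ε => ε ^ 3 := by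
    have h1 := hP.comp_tendsto hAt
    refine (h1.trans_isBigO ?_).congr (fun ε => rfl) (fun ε => rfl)
    exact (hAO.pow 3).congr (fun ε => rfl) (fun ε => rfl)
  -- algebraic expansions
  have hBA1 : (fun ε : ℝ => B ε - A ε - 2 * d1 * ε) =o[𝓝 (0:ℝ)] fun ε => ε ^ 2 :=
    (hB.sub hA).congr (fun ε => by ring) (fun ε => rfl)
  have hBA2 : (fun ε : ℝ => B ε + A ε - d2 * ε ^ 2) =o[𝓝 (0:ℝ)] fun ε => ε ^ 2 :=
    (hB.add hA).congr (fun ε => by ring) (fun ε => rfl)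
  have hBAO : (fun ε : ℝ => B ε + A ε) =O[𝓝 (0:ℝ)] fun ε => ε := hBO.add hAO
  have h2sq : (fun ε : ℝ => B ε ^ 2 - A ε ^ 2 - 2 * d1 * d2 * ε ^ 3)
      =o[𝓝 (0:ℝ)] fun ε => ε ^ 3 := by
    have t1 : (fun ε : ℝ => (B ε - A ε - 2 * d1 * ε) * (B ε + A ε))
        =o[𝓝 (0:ℝ)] fun ε => ε ^ 3 :=
      (hBA1.mul_isBigO hBAO).congr (fun ε => rfl) (fun ε => by ring)
    have t2 : (fun ε : ℝ => (2 * d1 * ε) * (B ε + A ε - d2 * ε ^ 2))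
        =o[𝓝 (0:ℝ)] fun ε => ε ^ 3 := by
      have h2' : (fun ε : ℝ => 2 * d1 * ε) =O[𝓝 (0:ℝ)] fun ε => ε :=
        (isBigO_refl _ _).const_mul_left (2 * d1)
      exact (h2'.mul_isLittleO hBA2).congr (fun ε => rfl) (fun ε => by ring)
    exact ((t1.add t2).congr (fun ε => by ring) (fun ε => rfl))
  have hBe2 : (fun ε : ℝ => B ε - d1 * ε) =O[𝓝 (0:ℝ)] fun ε => ε ^ 2 := by
    have h3 : (fun ε : ℝ => d2 * ε ^ 2 / 2) =O[𝓝 (0:ℝ)] fun ε => ε ^ 2 :=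
      ((isBigO_refl (fun ε : ℝ => ε ^ 2) _).const_mul_left (d2 / 2)).congr
        (fun ε => by ring) (fun ε => rfl)
    exact ((hB.isBigO.add h3).congr (fun ε => by ring) (fun ε => rfl))
  have hAe2 : (fun ε : ℝ => A ε + d1 * ε) =O[𝓝 (0:ℝ)] fun ε => ε ^ 2 := by
    have h3 : (fun ε : ℝ => d2 * ε ^ 2 / 2) =O[𝓝 (0:ℝ)] fun ε => ε ^ 2 :=
      ((isBigO_refl (fun ε : ℝ => ε ^ 2) _).const_mul_left (d2 / 2)).congr
        (fun ε => by ring) (fun ε => rfl)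
    exact ((hA.isBigO.add h3).congr (fun ε => by ring) (fun ε => rfl))
  have q2B : (fun ε : ℝ => B ε * (d1 * ε)) =O[𝓝 (0:ℝ)] fun ε => ε ^ 2 :=
    (hBO.mul ((isBigO_refl (fun ε : ℝ => ε) _).const_mul_left d1)).congr
      (fun ε => rfl) (fun ε => by ring)
  have q2A : (fun ε : ℝ => A ε * (d1 * ε)) =O[𝓝 (0:ℝ)] fun ε => ε ^ 2 :=
    (hAO.mul ((isBigO_refl (fun ε : ℝ => ε) _).const_mul_left d1)).congr
      (fun ε => rfl) (fun ε => by ring)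
  have q3 : (fun ε : ℝ => (d1 * ε) ^ 2) =O[𝓝 (0:ℝ)] fun ε => ε ^ 2 :=
    ((isBigO_refl (fun ε : ℝ => ε ^ 2) _).const_mul_left (d1 ^ 2)).congr
      (fun ε => by ring) (fun ε => rfl)
  have hcubB : (fun ε : ℝ => B ε ^ 3 - (d1 * ε) ^ 3) =o[𝓝 (0:ℝ)] fun ε => ε ^ 3 := by
    have hQB : (fun ε : ℝ => B ε ^ 2 + B ε * (d1 * ε) + (d1 * ε) ^ 2)
        =O[𝓝 (0:ℝ)] fun ε => ε ^ 2 := ((hBO.pow 2).add q2B).add q3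
    exact ((hBe2.mul hQB).trans_isLittleO h44).congr (fun ε => by ring) (fun ε => rfl)
  have hcubA : (fun ε : ℝ => A ε ^ 3 + (d1 * ε) ^ 3) =o[𝓝 (0:ℝ)] fun ε => ε ^ 3 := by
    have hQA : (fun ε : ℝ => A ε ^ 2 - A ε * (d1 * ε) + (d1 * ε) ^ 2)
        =O[𝓝 (0:ℝ)] fun ε => ε ^ 2 := ((hAO.pow 2).sub q2A).add q3
    exact ((hAe2.mul hQA).trans_isLittleO h44).congr (fun ε => by ring) (fun ε => rfl)
  have h3cube : (fun ε : ℝ => B ε ^ 3 - A ε ^ 3 - 2 * d1 ^ 3 * ε ^ 3)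
      =o[𝓝 (0:ℝ)] fun ε => ε ^ 3 :=
    (hcubB.sub hcubA).congr (fun ε => by ring) (fun ε => rfl)
  set C : ℝ := m R₀ * d1 * d2 / 2 + g₂ * d1 ^ 3 / 3 with hCdef
  have hSum : (fun ε : ℝ => P (B ε) - P (A ε) - 2 * C * ε ^ 3)
      =o[𝓝 (0:ℝ)] fun ε => ε ^ 3 := by
    have halg := (h2sq.const_mul_left (m R₀ / 2)).add (h3cube.const_mul_left (g₂ / 3))
    have h5 := (hPB.sub hPA).add halg
    refine h5.congr (fun ε => ?_) (fun ε => rfl)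
    rw [hCdef]; ring
  -- the bridge between the set integral and P
  have hGcont : ContinuousOn (fun s : ℝ => (s - R₀) * m s) (Ioo (0:ℝ) 1) := by
    apply ContinuousOn.mul
    · fun_prop
    · rw [hmdef]
      apply ContinuousOn.mul hψ.continuousOn
      have h2 : ContinuousOn (fun p : ℝ × ℝ => cη p.1 p.2) (Ioo (0:ℝ) 1 ×ˢ Ioo (0:ℝ) 1) :=
        hcη_smooth.continuousOn
      have hpair : ContinuousOn (fun x : ℝ => (x, R₀)) (Ioo (0:ℝ) 1) :=
        (continuous_id.prodMk continuous_const).continuousOn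
      exact ContinuousOn.comp (f := fun x : ℝ => (x, R₀)) h2 hpair (fun x hx => ⟨hx, hR₀⟩)
  have hbridge : ∀ᶠ ε : ℝ in 𝓝[>] (0:ℝ),
      (∫ R in Ioo (0 : ℝ) 1,
        (R - R₀) * ψ R * (cη R R₀ / (2 * ε) * (if |η R - η R₀| ≤ ε then (1 : ℝ) else 0)))
      = (P (B ε) - P (A ε)) / (2 * ε) := by
    filter_upwards [self_mem_nhdsWithin] with ε hεmem
    have hε0 : (0:ℝ) < ε := hεmem
    set a : ℝ := φ (η R₀ - ε) with hadef
    set b : ℝ := φ (η R₀ + ε) with hbdef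
    have ha : a ∈ Ioo (0:ℝ) 1 := hmemφ _
    have hb : b ∈ Ioo (0:ℝ) 1 := hmemφ _
    have hab : a ≤ b := (hφmono.monotone (by linarith))
    have hIccsub : Icc a b ⊆ Ioo (0:ℝ) 1 := fun x hx =>
      ⟨lt_of_lt_of_le ha.1 hx.1, lt_of_le_of_lt hx.2 hb.2⟩
    have hstep1 : (∫ R in Ioo (0 : ℝ) 1,
        (R - R₀) * ψ R * (cη R R₀ / (2 * ε) * (if |η R - η R₀| ≤ ε then (1 : ℝ) else 0)))
        = ∫ R in Ioo (0:ℝ) 1, (Icc a b).indicator (fun R => (R - R₀) * m R / (2 * ε)) R := by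
      apply setIntegral_congr_fun measurableSet_Ioo
      intro R hR
      dsimp only
      have hiff : |η R - η R₀| ≤ ε ↔ R ∈ Icc a b := by
        rw [abs_le, Set.mem_Icc]
        constructor
        · rintro ⟨h1, h2⟩
          constructor
          · exact (hmono.le_iff_le ha hR).1 (by rw [hright]; linarith)
          · exact (hmono.le_iff_le hR hb).1 (by rw [hright]; linarith)
        · rintro ⟨h1, h2⟩
          have l1 : η a ≤ η R := (hmono.le_iff_le ha hR).2 h1
          have l2 : η R ≤ η b := (hmono.le_iff_le hR hb).2 h2
          rw [hright] at l1 l2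
          constructor <;> linarith
      by_cases hRmem : R ∈ Icc a b
      · rw [Set.indicator_of_mem hRmem, if_pos (hiff.2 hRmem)]
        show (R - R₀) * ψ R * (cη R R₀ / (2 * ε) * 1) = (R - R₀) * (ψ R * cη R R₀) / (2 * ε)
        ring
      · rw [Set.indicator_of_notMem hRmem, if_neg (fun h => hRmem (hiff.1 h))]
        ring
    have hstep2 : (∫ R in Ioo (0:ℝ) 1,
          (Icc a b).indicator (fun R => (R - R₀) * m R / (2 * ε)) R)
        = ∫ R in Icc a b, (R - R₀) * m R / (2 * ε) := by
      rw [setIntegral_indicator measurableSet_Icc,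
        Set.inter_eq_self_of_subset_right hIccsub]
    have hstep3 : (∫ R in Icc a b, (R - R₀) * m R / (2 * ε))
        = ∫ R in a..b, (R - R₀) * m R / (2 * ε) := by
      rw [intervalIntegral.integral_of_le hab, integral_Icc_eq_integral_Ioc]
    have hstep4 : (∫ R in a..b, (R - R₀) * m R / (2 * ε))
        = (∫ R in a..b, (R - R₀) * m R) / (2 * ε) := intervalIntegral.integral_div _ _
    have i1 : IntervalIntegrable (fun s : ℝ => (s - R₀) * m s) volume a R₀ :=
      (hGcont.mono ((Set.ordConnected_Ioo).uIcc_subset ha hR₀)).intervalIntegrable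
    have i2 : IntervalIntegrable (fun s : ℝ => (s - R₀) * m s) volume R₀ b :=
      (hGcont.mono ((Set.ordConnected_Ioo).uIcc_subset hR₀ hb)).intervalIntegrable
    have hadj := intervalIntegral.integral_add_adjacent_intervals i1 i2
    have eB : R₀ + B ε = b := by simp only [hBdef, hbdef]; ring
    have eA : R₀ + A ε = a := by simp only [hAdef, hadef]; ring
    have hPB' : P (B ε) = ∫ s in R₀..b, (s - R₀) * m s := by
      simp only [hPdef]; rw [eB]
    have hPA' : P (A ε) = ∫ s in R₀..a, (s - R₀) * m s := by
      simp only [hPdef]; rw [eA]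
    have hsplitint : (∫ s in a..b, (s - R₀) * m s) = P (B ε) - P (A ε) := by
      rw [hPB', hPA', ← hadj, intervalIntegral.integral_symm R₀ a]
      ring
    rw [hstep1, hstep2, hstep3, hstep4, hsplitint]
  -- the constant
  have hKC : ∀ ε : ℝ, ε ^ 2 * (deriv η R₀ * deriv ψ R₀ - deriv (deriv η) R₀ * ψ R₀)
      / (3 * (deriv η R₀) ^ 3) = C * ε ^ 2 := by
    intro ε
    rw [hCdef, hm0, hg₂def, hd1def, hd2def]
    field_simp
    ring
  have hS : (fun ε : ℝ => P (B ε) - P (A ε) - 2 * C * ε ^ 3)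
      =o[𝓝[>] (0:ℝ)] fun ε => ε ^ 3 := hSum.mono nhdsWithin_le_nhds
  have hO : (fun ε : ℝ => (2 * ε)⁻¹) =O[𝓝[>] (0:ℝ)] fun ε => ε⁻¹ := by
    rw [isBigO_iff]
    refine ⟨1, ?_⟩
    filter_upwards [self_mem_nhdsWithin] with ε hεmem
    have hε0 : (0:ℝ) < ε := hεmem
    rw [norm_inv, norm_inv]
    simp only [Real.norm_eq_abs, one_mul]
    rw [abs_of_pos (by linarith : (0:ℝ) < 2 * ε), abs_of_pos hε0]
    apply inv_anti₀ hε0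
    linarith
  have hfinal : (fun ε : ℝ => (P (B ε) - P (A ε)) / (2 * ε) - C * ε ^ 2)
      =o[𝓝[>] (0:ℝ)] fun ε => ε ^ 2 := by
    have h6 := hS.mul_isBigO hO
    refine h6.congr' ?_ ?_
    · filter_upwards [self_mem_nhdsWithin] with ε hεmem
      have hε0 : (0:ℝ) < ε := hεmem
      have hne : ε ≠ 0 := ne_of_gt hε0
      field_simp
    · filter_upwards [self_mem_nhdsWithin] with ε hεmem
      have hε0 : (0:ℝ) < ε := hεmem
      have hne : ε ≠ 0 := ne_of_gt hε0
      show ε ^ 3 * ε⁻¹ = ε ^ 2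
      rw [pow_succ, mul_assoc, mul_inv_cancel₀ hne, mul_one]
  refine hfinal.congr' ?_ EventuallyEq.rfl
  filter_upwards [hbridge] with ε hε
  rw [hε, hKC ε]

end
end
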